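/- arXiv:2003.10954 — 5 statements merged into one kernel-verified Lean document; each statement's English description precedes it below -/
import Mathlib

section
/- If 2 a20 + b11 = 0 and a21 + b12 = 0, then there exists a polynomial function H : ℝ² → ℝ such that ∂H/∂y (x,y) = y + a20(x^2-1) + a21 x^2 y + a01 y + a02 y^2 + a03 y^3 and ∂H/∂x (x,y) = -(x - x^3 + b30(x^3-x) + b11 x y + b12 x y^2) for all (x,y); consequently H is a first integral of X, i.e. the inner product of the gradient of H with X vanishes identically. -/
/-! The divergence of `X` is `(2 a20 + b11) x + 2 (a21 + b12) x y`, so under the two conditions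
`X` is Hamiltonian: `H` is obtained by integrating the first component in `y` and adding the
antiderivative in `x` of the `y`-free part of the second component. -/

open MvPolynomial

theorem MvPolynomial.hasDerivAt_eval_update {σ 𝕜 : Type*} [NontriviallyNormedField 𝕜]
    [DecidableEq σ] (p : MvPolynomial σ 𝕜) (v : σ → 𝕜) (i : σ) (t : 𝕜) :
    HasDerivAt (fun s => eval (Function.update v i s) p)
      (eval (Function.update v i t) (pderiv i p)) t := by
  induction p using MvPolynomial.induction_on with
  | C a => simpa using hasDerivAt_const t a
  | add p q hp hq => simpa only [map_add] using hp.fun_add hq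
  | mul_X p j hp =>
    have hX : HasDerivAt (fun s => eval (Function.update v i s) (X j))
        (eval (Function.update v i t) (pderiv i (X j))) t := by
      by_cases hij : j = i
      · subst hij
        simpa [pderiv_X_self] using hasDerivAt_id' t
      · simpa [pderiv_X_of_ne hij, hij] using hasDerivAt_const t (v j)
    simp only [map_mul]
    refine (hp.fun_mul hX).congr_deriv ?_
    simp only [Derivation.leibniz, smul_eq_mul, map_add, map_mul]
    ring

section vec2

variable {𝕜 : Type*} [NontriviallyNormedField 𝕜] (p : MvPolynomial (Fin 2) 𝕜) (x y : 𝕜)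

theorem MvPolynomial.hasDerivAt_eval_vec2_fst :
    HasDerivAt (fun x' => eval ![x', y] p) (eval ![x, y] (pderiv 0 p)) x := by
  have hupdate : ∀ s : 𝕜, Function.update ![x, y] 0 s = ![s, y] := fun s => by
    ext i; fin_cases i <;> rfl
  simpa only [hupdate] using p.hasDerivAt_eval_update ![x, y] 0 x

theorem MvPolynomial.hasDerivAt_eval_vec2_snd :
    HasDerivAt (fun y' => eval ![x, y'] p) (eval ![x, y] (pderiv 1 p)) y := by
  have hupdate : ∀ s : 𝕜, Function.update ![x, y] 1 s = ![x, s] := fun s => by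
    ext i; fin_cases i <;> rfl
  simpa only [hupdate] using p.hasDerivAt_eval_update ![x, y] 1 y

end vec2

noncomputable def hamiltonianPoly (a20 a21 a01 a02 a03 b30 : ℝ) : MvPolynomial (Fin 2) ℝ :=
  C ((1 + a01) / 2) * X 1 ^ 2 + C a20 * (X 0 ^ 2 - 1) * X 1 + C (a21 / 2) * X 0 ^ 2 * X 1 ^ 2
    + C (a02 / 3) * X 1 ^ 3 + C (a03 / 4) * X 1 ^ 4
    - C ((1 - b30) / 2) * X 0 ^ 2 + C ((1 - b30) / 4) * X 0 ^ 4

section hamiltonianPoly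

variable (a20 a21 a01 a02 a03 b30 x y : ℝ)

theorem eval_pderiv_fst_hamiltonianPoly :
    eval ![x, y] (pderiv 0 (hamiltonianPoly a20 a21 a01 a02 a03 b30))
      = -(x - x ^ 3 + b30 * (x ^ 3 - x) - 2 * a20 * x * y - a21 * x * y ^ 2) := by
  simp only [hamiltonianPoly, map_add, map_sub, map_mul, map_pow, map_one, map_zero,
    Derivation.leibniz, Derivation.leibniz_pow, derivation_C, Derivation.map_one_eq_zero, pderiv_X,
    Pi.single_eq_same, Pi.single_eq_of_ne, ne_eq, one_ne_zero, not_false_eq_true, smul_eq_mul,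
    map_nsmul, eval_X, eval_C, Matrix.cons_val_zero, Matrix.cons_val_one, Matrix.cons_val_fin_one]
  ring

theorem eval_pderiv_snd_hamiltonianPoly :
    eval ![x, y] (pderiv 1 (hamiltonianPoly a20 a21 a01 a02 a03 b30))
      = y + a20 * (x ^ 2 - 1) + a21 * x ^ 2 * y + a01 * y + a02 * y ^ 2 + a03 * y ^ 3 := by
  simp only [hamiltonianPoly, map_add, map_sub, map_mul, map_pow, map_one, map_zero,
    Derivation.leibniz, Derivation.leibniz_pow, derivation_C, Derivation.map_one_eq_zero, pderiv_X,
    Pi.single_eq_same, Pi.single_eq_of_ne, ne_eq, zero_ne_one, not_false_eq_true, smul_eq_mul,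
    map_nsmul, eval_X, eval_C, Matrix.cons_val_zero, Matrix.cons_val_one, Matrix.cons_val_fin_one]
  ring

end hamiltonianPoly

/-- If `2 a20 + b11 = 0` and `a21 + b12 = 0`, then there exists a polynomial function
`H : ℝ² → ℝ` with `∂H/∂y = P`, `∂H/∂x = -Q`; consequently `H` is a first integral of
the vector field `X = (P, Q)`, i.e. `∇H · X ≡ 0`. -/
theorem hamiltonian_first_integral (a20 a21 a01 a02 a03 b30 b11 b12 : ℝ)
    (h1 : 2*a20 + b11 = 0) (h2 : a21 + b12 = 0) :
    ∃ H : ℝ → ℝ → ℝ,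
      (∃ p : MvPolynomial (Fin 2) ℝ, ∀ x y : ℝ, H x y = MvPolynomial.eval ![x, y] p) ∧
      (∀ x y : ℝ, deriv (fun y' => H x y') y
          = y + a20*(x^2-1) + a21*x^2*y + a01*y + a02*y^2 + a03*y^3) ∧
      (∀ x y : ℝ, deriv (fun x' => H x' y) x
          = -(x - x^3 + b30*(x^3-x) + b11*x*y + b12*x*y^2)) ∧
      (∀ x y : ℝ,
        deriv (fun x' => H x' y) x *
            (y + a20*(x^2-1) + a21*x^2*y + a01*y + a02*y^2 + a03*y^3)
          + deriv (fun y' => H x y') y *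
            (x - x^3 + b30*(x^3-x) + b11*x*y + b12*x*y^2) = 0) := by
  set p := hamiltonianPoly a20 a21 a01 a02 a03 b30
  have hy : ∀ x y : ℝ, deriv (fun y' => eval ![x, y'] p) y
      = y + a20*(x^2-1) + a21*x^2*y + a01*y + a02*y^2 + a03*y^3 := fun x y => by
    rw [(p.hasDerivAt_eval_vec2_snd x y).deriv, eval_pderiv_snd_hamiltonianPoly]
  have hx : ∀ x y : ℝ, deriv (fun x' => eval ![x', y] p) x
      = -(x - x^3 + b30*(x^3-x) + b11*x*y + b12*x*y^2) := fun x y => by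
    rw [(p.hasDerivAt_eval_vec2_fst x y).deriv, eval_pderiv_fst_hamiltonianPoly]
    linear_combination (x * y) * h1 + (x * y ^ 2) * h2
  refine ⟨fun x y => eval ![x, y] p, ⟨p, fun _ _ => rfl⟩, hy, hx, fun x y => ?_⟩
  rw [hx, hy]
  ring
end

section
/- Assume b30 ≠ 1, 2 a20 + b11 = 0 and (1 - b30) a02 = a20 (2 a21 - b12). Put P₂(y) = (1/(b30-1))(b11 y + b12 y²), and define A = 2(1+a01+a21)/(1-b30) - 4 a20²/(1-b30)², B = 2 a03/(1-b30) + 2 a21 b12/(1-b30)², C = 2(a21 + b12)/(1-b30). Let Φ(x,y) = (y², x² - 1 + P₂(y)) (coordinates (v,u)). Then the 1-form of the cubic system X equals ((1-b30)/4) times the pullback under Φ of the 1-form (A + B v + C u) dv + 2 u du of the linear system v̇ = 2u, u̇ = -A - B v - C u. Componentwise, for all (x,y): ((1-b30)/4) · 2(x²-1+P₂(y)) · 2x = -(x - x^3 + b30(x^3-x) + b11 x y + b12 x y^2) and ((1-b30)/4) · [ (A + B y² + C(x²-1+P₂(y))) · 2y + 2(x²-1+P₂(y)) P₂'(y) ]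 = y + a20(x^2-1) + a21 x^2 y + a01 y + a02 y^2 + a03 y^3. -/
/-!
Once `P₂'(y) = (b11 + 2 b12 y)/(b30 - 1)` is computed, both components are identities between
polynomials in `x, y` with coefficients rational in the parameters. The first holds identically.
In the second, `A`, `B`, `C` are read off the coefficients of `y`, `y³` and `x² y`, while the
coefficients of `1`, `x²` and `y²` carry no free constant: matching them is exactly
`2 a20 + b11 = 0` and `(1 - b30) a02 = a20 (2 a21 - b12)`.
-/

theorem hasDerivAt_const_mul_linear_add_sq (c p q y : ℝ) :
    HasDerivAt (fun y => c * (p * y + q * y ^ 2)) (c * (p + 2 * q * y)) y := by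
  refine ((((hasDerivAt_id y).const_mul p).add ((hasDerivAt_pow 2 y).const_mul q)).const_mul c)
    |>.congr_deriv ?_
  push_cast
  ring

/-- In the pull-back case (`2 a20 + b11 = 0`, `(1-b30) a02 = a20 (2 a21 - b12)`), the
1-form of the cubic system `X` equals `((1-b30)/4)` times the pullback under
`Φ(x,y) = (y², x² - 1 + P₂(y))` of the 1-form `(A + B v + C u) dv + 2 u du`
of the linear system `v̇ = 2u, u̇ = -A - B v - C u`; stated componentwise. -/
theorem cubic_pullback_of_linear (a20 a21 a01 a02 a03 b30 b11 b12 : ℝ)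
    (hb : b30 ≠ 1) (h1 : 2*a20 + b11 = 0)
    (h2 : (1-b30)*a02 = a20*(2*a21 - b12)) :
    let P2 : ℝ → ℝ := fun y => (1/(b30-1)) * (b11*y + b12*y^2)
    let A : ℝ := 2*(1+a01+a21)/(1-b30) - 4*a20^2/(1-b30)^2
    let B : ℝ := 2*a03/(1-b30) + 2*a21*b12/(1-b30)^2
    let C : ℝ := 2*(a21 + b12)/(1-b30)
    ∀ x y : ℝ,
      ((1-b30)/4) * (2*(x^2-1+P2 y)) * (2*x)
        = -(x - x^3 + b30*(x^3-x) + b11*x*y + b12*x*y^2) ∧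
      ((1-b30)/4) * ((A + B*y^2 + C*(x^2-1+P2 y)) * (2*y)
          + 2*(x^2-1+P2 y) * deriv P2 y)
        = y + a20*(x^2-1) + a21*x^2*y + a01*y + a02*y^2 + a03*y^3 := by
  intro P2 A B C x y
  have hb₁ : 1 - b30 ≠ 0 := sub_ne_zero.mpr hb.symm
  have hb11 : b11 = -(2 * a20) := by linarith
  have ha02 : a02 = a20 * (2 * a21 - b12) / (1 - b30) := by
    rw [eq_div_iff hb₁, ← h2]
    ring
  rw [(hasDerivAt_const_mul_linear_add_sq _ b11 b12 y).deriv]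
  simp only [P2, A, B, C]
  constructor
  · field_simp
    ring
  · subst hb11 ha02
    field_simp
    ring
end

section
/- If a₀ = b₁, c₁ - a₀ b₁ > 0 and a₁ = 2 b₂ (the Hamiltonian case), then the vector field Y has a center at the origin. -/
/-!
With `u = ξ + P₂(y)` the field becomes `u' = f(y)`, `y' = -u`, where, precisely because
`a₀ = b₁` and `a₁ = 2 b₂`, `f = P₃ - P₂' P₂` is the derivative of a potential `y² Q(y)` with
`Q(0) = (c₁ - a₀ b₁) / 2 > 0`. Near `0` the potential is `φ(y)² / 2` with `φ(y) = y √(2 Q(y))`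
strictly increasing, and in the coordinates `(u, φ(y)) = r (sin θ, cos θ)` the flow preserves `r`
and turns `θ` at the positive speed `φ'(y)`. The angle therefore solves an autonomous equation
`θ' = g(θ)` with `g > 0` and `2π`-periodic, whose solutions gain `2π` in finite time, so every
orbit near the origin is closed.
-/

open Real Set Filter Function Topology

/-- A C¹ vector field `X` on `ℝ²` has a center at `p` if `X p = 0` and there is `ε > 0`
such that every point `z ≠ p` with `‖z - p‖ < ε` lies on a nonconstant periodic orbit
through `z`: a nonconstant differentiable curve `γ : ℝ → ℝ²` and `T > 0` with `γ 0 = z`,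
`γ' t = X (γ t)` for all `t`, and `γ T = z`. -/
def HasCenterAt (X : ℝ × ℝ → ℝ × ℝ) (p : ℝ × ℝ) : Prop :=
  X p = 0 ∧
  ∃ ε > 0, ∀ z : ℝ × ℝ, z ≠ p → ‖z - p‖ < ε →
    ∃ (γ : ℝ → ℝ × ℝ) (T : ℝ), 0 < T ∧ γ 0 = z ∧
      (∀ t : ℝ, HasDerivAt γ (X (γ t)) t) ∧ γ T = z ∧ (∃ t₁ t₂ : ℝ, γ t₁ ≠ γ t₂)

theorem Function.Periodic.exists_hasDerivAt_comp_of_pos {g : ℝ → ℝ} {T : ℝ} (hper : Periodic g T)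
    (hT : 0 < T) (hg : Continuous g) (hpos : ∀ x, 0 < g x) (θ₀ : ℝ) :
    ∃ (θ : ℝ → ℝ) (L : ℝ), 0 < L ∧ θ 0 = θ₀ ∧ (∀ t, HasDerivAt θ (g (θ t)) t) ∧
      (∀ t, θ (t + L) = θ t + T) ∧ Surjective θ := by
  -- `θ` inverts the time `F x = ∫₀ˣ 1/g` needed to reach the angle `x`.
  set F : ℝ → ℝ := fun x => ∫ s in (0 : ℝ)..x, (g s)⁻¹
  have hginv : Continuous fun x => (g x)⁻¹ := hg.inv₀ fun x => (hpos x).ne'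
  have hF : ∀ x, HasDerivAt F (g x)⁻¹ x := fun x =>
    (hginv.integral_hasStrictDerivAt 0 x).hasDerivAt
  have hFc : Continuous F := continuous_iff_continuousAt.2 fun x => (hF x).continuousAt
  have hFmono : StrictMono F :=
    strictMono_of_hasDerivAt_pos hF fun x => inv_pos.2 (hpos x)
  have hperinv : Periodic (fun x => (g x)⁻¹) T := fun x => by simp only [hper x]
  have hFsurj : Surjective F := hFc.surjective
    (hperinv.tendsto_atTop_intervalIntegral_of_pos' (hginv.intervalIntegrable 0 T)
      (fun x => inv_pos.2 (hpos x)) hT)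
    (hperinv.tendsto_atBot_intervalIntegral_of_pos' (hginv.intervalIntegrable 0 T)
      (fun x => inv_pos.2 (hpos x)) hT)
  have hFadd : ∀ x, F (x + T) = F x + F T := fun x => by
    simpa [F, hperinv.intervalIntegral_add_eq x 0] using
      hperinv.intervalIntegral_add_eq_add 0 x hginv.intervalIntegrable
  set E := StrictMono.orderIsoOfSurjective F hFmono hFsurj
  refine ⟨fun t => E.symm (F θ₀ + t), F T, ?_, ?_, fun t => ?_, fun t => ?_, ?_⟩
  · simpa [F] using hFmono hT
  · simp [E]
  · have hE : HasDerivAt E (g (E.symm (F θ₀ + t)))⁻¹ (E.symm (F θ₀ + t)) := hF _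
    have := (hE.of_local_left_inverse E.symm.continuous.continuousAt (inv_ne_zero (hpos _).ne')
      (Eventually.of_forall E.apply_symm_apply)).comp t ((hasDerivAt_id t).const_add (F θ₀))
    simpa [Function.comp_def] using this
  · rw [E.symm_apply_eq, ← add_assoc]
    change _ = F _
    rw [hFadd]
    exact congrArg (· + F T) (E.apply_symm_apply _).symm
  · exact E.symm.surjective.comp (add_left_surjective (F θ₀))

theorem StrictMonoOn.exists_orderIso_eqOn_Icc {f : ℝ → ℝ} {a b : ℝ} (hab : a ≤ b)
    (hf : StrictMonoOn f (Icc a b)) (hc : ContinuousOn f (Icc a b)) :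
    ∃ e : ℝ ≃o ℝ, EqOn f e (Icc a b) := by
  -- extend `f` by lines of slope one outside `[a, b]`
  set p : ℝ → ℝ := fun x => projIcc a b hab x
  set h : ℝ → ℝ := fun x => f (p x) + (x - p x)
  have hp : Continuous p := continuous_subtype_val.comp continuous_projIcc
  have hpmem : ∀ x, p x ∈ Icc a b := fun x => (projIcc a b hab x).2
  have hmono : StrictMono h := by
    intro x y hxy
    have hpxy : p x ≤ p y := monotone_projIcc hab hxy.le
    have hlip : p y - p x ≤ y - x := by
      have := (LipschitzWith.projIcc hab).dist_le_mul y x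
      rw [NNReal.coe_one, one_mul, Subtype.dist_eq, Real.dist_eq, Real.dist_eq] at this
      linarith [le_abs_self (p y - p x), abs_sub_comm (y:ℝ) x, abs_of_pos (sub_pos.2 hxy)]
    rcases hpxy.lt_or_eq with hlt | heq
    · have := hf (hpmem x) (hpmem y) hlt
      simp only [h]; linarith
    · simp only [h, heq]; linarith
  have hcont : Continuous h :=
    (hc.comp_continuous hp hpmem).add (continuous_id.sub hp)
  have hsurj : Surjective h := by
    refine hcont.surjective ?_ ?_
    · refine (tendsto_atTop_add_const_left _ (f b - b) tendsto_id).congr' ?_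
      filter_upwards [eventually_ge_atTop b] with x hx
      simp only [id_eq, projIcc_of_right_le hab hx, h, p]
      ring
    · refine (tendsto_atBot_add_const_left _ (f a - a) tendsto_id).congr' ?_
      filter_upwards [eventually_le_atBot a] with x hx
      simp only [id_eq, projIcc_of_le_left hab hx, h, p]
      ring
  refine ⟨StrictMono.orderIsoOfSurjective h hmono hsurj, fun x hx => ?_⟩
  simp [h, p, projIcc_of_mem hab hx]

theorem exists_local_inverse_of_hasDerivAt_pos {φ dφ : ℝ → ℝ} {δ : ℝ} (hδ : 0 < δ)
    (hφ0 : φ 0 = 0) (hφ : ∀ y ∈ Icc (-δ) δ, HasDerivAt φ (dφ y) y)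
    (hpos : ∀ y ∈ Icc (-δ) δ, 0 < dφ y) :
    ∃ ψ : ℝ → ℝ, ∃ η > 0, Continuous ψ ∧ (∀ y ∈ Icc (-δ) δ, ψ (φ y) = y) ∧
      ∀ x, |x| < η → ψ x ∈ Ioo (-δ) δ ∧ φ (ψ x) = x ∧ HasDerivAt ψ (dφ (ψ x))⁻¹ x := by
  have hc : ContinuousOn φ (Icc (-δ) δ) := fun y hy => (hφ y hy).continuousAt.continuousWithinAt
  have hmono : StrictMonoOn φ (Icc (-δ) δ) :=
    strictMonoOn_of_hasDerivWithinAt_pos (convex_Icc _ _) hc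
      (fun y hy => (hφ y (interior_subset hy)).hasDerivWithinAt)
      fun y hy => hpos y (interior_subset hy)
  obtain ⟨e, he⟩ := hmono.exists_orderIso_eqOn_Icc (by linarith) hc
  have h0 : (0 : ℝ) ∈ Icc (-δ) δ := ⟨by linarith, hδ.le⟩
  have hl : -δ ∈ Icc (-δ) δ := ⟨le_rfl, by linarith⟩
  have hr : δ ∈ Icc (-δ) δ := ⟨by linarith, le_rfl⟩
  have hlow : φ (-δ) < 0 := hφ0 ▸ hmono hl h0 (by linarith)
  have hhigh : 0 < φ δ := hφ0 ▸ hmono h0 hr hδ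
  refine ⟨e.symm, min (-φ (-δ)) (φ δ), lt_min (by linarith) hhigh, e.symm.continuous,
    fun y hy => by rw [he hy, e.symm_apply_apply], fun x hx => ?_⟩
  have hηl := min_le_left (-φ (-δ)) (φ δ)
  have hηr := min_le_right (-φ (-δ)) (φ δ)
  rw [abs_lt] at hx
  have hx' : e.symm x ∈ Ioo (-δ) δ :=
    ⟨e.lt_symm_apply.2 (by rw [← he hl]; linarith), e.symm_apply_lt.2 (by rw [← he hr]; linarith)⟩
  have heq : φ (e.symm x) = x := by rw [he (Ioo_subset_Icc_self hx'), e.apply_symm_apply]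
  refine ⟨hx', heq, ?_⟩
  have hφe : φ =ᶠ[nhds (e.symm x)] e := by
    filter_upwards [isOpen_Ioo.mem_nhds hx'] with y hy using he (Ioo_subset_Icc_self hy)
  exact ((hφ _ (Ioo_subset_Icc_self hx')).congr_of_eventuallyEq hφe.symm).of_local_left_inverse
    e.symm.continuous.continuousAt (hpos _ (Ioo_subset_Icc_self hx')).ne'
    (Eventually.of_forall e.apply_symm_apply)

theorem exists_sqrt_mul_sin_mul_cos_eq (a b : ℝ) :
    ∃ θ, √(a ^ 2 + b ^ 2) * sin θ = a ∧ √(a ^ 2 + b ^ 2) * cos θ = b := by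
  refine ⟨Complex.arg (b + a * Complex.I), ?_, ?_⟩ <;>
  rw [add_comm (a ^ 2), ← Complex.norm_add_mul_I]
  · simp [Complex.norm_mul_sin_arg]
  · simp [Complex.norm_mul_cos_arg]

theorem hasDerivAt_rotation_orbit {f ψ dφ θ : ℝ → ℝ} {r t : ℝ}
    (hθ : HasDerivAt θ (dφ (ψ (r * cos (θ t)))) t)
    (hψ : HasDerivAt ψ (dφ (ψ (r * cos (θ t))))⁻¹ (r * cos (θ t)))
    (hdφ : dφ (ψ (r * cos (θ t))) ≠ 0)
    (hf : f (ψ (r * cos (θ t))) = r * cos (θ t) * dφ (ψ (r * cos (θ t)))) :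
    HasDerivAt (fun t => (r * sin (θ t), ψ (r * cos (θ t))))
      (f (ψ (r * cos (θ t))), -(r * sin (θ t))) t := by
  refine ((hθ.sin.const_mul r).congr_deriv ?_).prodMk
    ((hψ.comp t (hθ.cos.const_mul r)).congr_deriv ?_)
  · rw [hf]; ring
  · field_simp

theorem exists_periodic_orbit_of_local_inverse {f φ dφ ψ : ℝ → ℝ} {δ η r : ℝ}
    (hdφ : ContinuousOn dφ (Icc (-δ) δ)) (hpos : ∀ y ∈ Icc (-δ) δ, 0 < dφ y)
    (hf : ∀ y ∈ Icc (-δ) δ, f y = φ y * dφ y) (hψc : Continuous ψ)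
    (hψ : ∀ x, |x| < η → ψ x ∈ Ioo (-δ) δ ∧ φ (ψ x) = x ∧ HasDerivAt ψ (dφ (ψ x))⁻¹ x)
    (hr : 0 < r) (hrη : r < η) (θ₀ : ℝ) :
    ∃ (γ : ℝ → ℝ × ℝ) (L : ℝ), 0 < L ∧ γ 0 = (r * sin θ₀, ψ (r * cos θ₀)) ∧
      (∀ t, HasDerivAt γ (f (γ t).2, -(γ t).1) t) ∧ γ L = γ 0 ∧ ∃ t₁ t₂, γ t₁ ≠ γ t₂ := by
  have hcosη : ∀ σ, |r * cos σ| < η := fun σ => by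
    rw [abs_mul, abs_of_pos hr]
    exact (mul_le_of_le_one_right hr.le (abs_cos_le_one σ)).trans_lt hrη
  have hψmem : ∀ σ, ψ (r * cos σ) ∈ Icc (-δ) δ := fun σ => Ioo_subset_Icc_self (hψ _ (hcosη σ)).1
  have hper : Periodic (fun σ => dφ (ψ (r * cos σ))) (2 * π) := fun σ => by simp [cos_add_two_pi]
  obtain ⟨θ, L, hL, hθ0, hθ, hθL, hθsurj⟩ := hper.exists_hasDerivAt_comp_of_pos two_pi_pos
    (hdφ.comp_continuous (hψc.comp (by fun_prop)) hψmem) (fun σ => hpos _ (hψmem σ)) θ₀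
  refine ⟨fun t => (r * sin (θ t), ψ (r * cos (θ t))), L, hL, by simp only [hθ0],
    fun t => ?_, ?_, ?_⟩
  · obtain ⟨-, hφψ, hψ'⟩ := hψ _ (hcosη (θ t))
    exact hasDerivAt_rotation_orbit (hθ t) hψ' (hpos _ (hψmem _)).ne'
      (by rw [hf _ (hψmem _), hφψ])
  · have hθL0 : θ L = θ 0 + 2 * π := by simpa using hθL 0
    simp only [hθL0, sin_add_two_pi, cos_add_two_pi]
  · obtain ⟨t₁, ht₁⟩ := hθsurj (π / 2)
    obtain ⟨t₂, ht₂⟩ := hθsurj (-(π / 2))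
    refine ⟨t₁, t₂, fun h => ?_⟩
    have := congrArg Prod.fst h
    simp only [ht₁, ht₂, sin_pi_div_two, sin_neg] at this
    linarith

theorem hasCenterAt_newton_of_eq_mul_deriv {f φ dφ : ℝ → ℝ} {δ : ℝ} (hδ : 0 < δ)
    (hφ0 : φ 0 = 0) (hφ : ∀ y ∈ Icc (-δ) δ, HasDerivAt φ (dφ y) y)
    (hdφ : ContinuousOn dφ (Icc (-δ) δ)) (hpos : ∀ y ∈ Icc (-δ) δ, 0 < dφ y)
    (hf : ∀ y ∈ Icc (-δ) δ, f y = φ y * dφ y) :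
    HasCenterAt (fun p => (f p.2, -p.1)) (0, 0) := by
  obtain ⟨ψ, η, hη, hψc, hψφ, hψ⟩ := exists_local_inverse_of_hasDerivAt_pos hδ hφ0 hφ hpos
  have h0 : (0 : ℝ) ∈ Icc (-δ) δ := ⟨by linarith, hδ.le⟩
  refine ⟨by simp [hf 0 h0, hφ0], ?_⟩
  obtain ⟨ε, hε, hball⟩ : ∃ ε > 0, ∀ z : ℝ × ℝ, ‖z - (0, 0)‖ < ε →
      z.2 ∈ Ioo (-δ) δ ∧ √(z.1 ^ 2 + φ z.2 ^ 2) < η := by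
    have hc : ContinuousAt (fun z : ℝ × ℝ => √(z.1 ^ 2 + φ z.2 ^ 2)) (0, 0) :=
      (continuousAt_fst.pow 2 |>.add
        (((hφ 0 h0).continuousAt.comp_of_eq continuousAt_snd rfl).pow 2)).sqrt
    have : ∀ᶠ z in 𝓝 ((0 : ℝ), (0 : ℝ)), z.2 ∈ Ioo (-δ) δ ∧ √(z.1 ^ 2 + φ z.2 ^ 2) < η :=
      (continuousAt_snd.eventually_mem (Ioo_mem_nhds (by linarith) hδ)).and
        (hc.eventually_lt continuousAt_const (by simpa [hφ0] using hη))
    simpa [dist_eq_norm] using Metric.eventually_nhds_iff.1 this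
  refine ⟨ε, hε, fun z hz0 hzε => ?_⟩
  obtain ⟨hy, hrη⟩ := hball z hzε
  set r := √(z.1 ^ 2 + φ z.2 ^ 2)
  have hr : 0 < r := by
    refine Real.sqrt_pos.2 (lt_of_le_of_ne (by positivity) fun h => hz0 ?_)
    have h1 : z.1 = 0 := by nlinarith [sq_nonneg z.1, sq_nonneg (φ z.2)]
    have h2 : φ z.2 = 0 := by nlinarith [sq_nonneg z.1, sq_nonneg (φ z.2)]
    have h3 := hψφ z.2 (Ioo_subset_Icc_self hy)
    rw [h2, ← hφ0, hψφ 0 h0] at h3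
    exact Prod.ext h1 h3.symm
  obtain ⟨θ₀, hsin, hcos⟩ : ∃ θ₀, r * sin θ₀ = z.1 ∧ r * cos θ₀ = φ z.2 :=
    exists_sqrt_mul_sin_mul_cos_eq z.1 (φ z.2)
  obtain ⟨γ, L, hL, hγ0, hγ, hγL, hne⟩ :=
    exists_periodic_orbit_of_local_inverse hdφ hpos hf hψc hψ hr hrη θ₀
  rw [hsin, hcos, hψφ z.2 (Ioo_subset_Icc_self hy)] at hγ0
  exact ⟨γ, L, hL, hγ0, hγ, hγL.trans hγ0, hne⟩

theorem hasCenterAt_newton_of_potential {f Q dQ : ℝ → ℝ} (hQ : ∀ y, HasDerivAt Q (dQ y) y)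
    (hdQ : Continuous dQ) (hQ0 : 0 < Q 0) (hf : ∀ y, f y = 2 * y * Q y + y ^ 2 * dQ y) :
    HasCenterAt (fun p => (f p.2, -p.1)) (0, 0) := by
  have hQc : Continuous Q := continuous_iff_continuousAt.2 fun y => (hQ y).continuousAt
  have hR : Continuous fun y => 2 * Q y + y * dQ y := by fun_prop
  obtain ⟨δ, hδ, hδQ⟩ : ∃ δ > 0, ∀ y ∈ Icc (-δ) δ, 0 < Q y ∧ 0 < 2 * Q y + y * dQ y := by
    have hQ0' : 0 < 2 * Q 0 + 0 * dQ 0 := by simpa using hQ0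
    have := (continuousAt_const.eventually_lt hQc.continuousAt hQ0).and
      (continuousAt_const.eventually_lt hR.continuousAt hQ0')
    simpa using (nhds_basis_Icc_pos 0).eventually_iff.1 this
  have hsq : ∀ y ∈ Icc (-δ) δ, √(2 * Q y) ^ 2 = 2 * Q y := fun y hy =>
    sq_sqrt (by linarith [(hδQ y hy).1])
  have hsqpos : ∀ y ∈ Icc (-δ) δ, 0 < √(2 * Q y) := fun y hy =>
    sqrt_pos.2 (by linarith [(hδQ y hy).1])
  refine hasCenterAt_newton_of_eq_mul_deriv (φ := fun y => y * √(2 * Q y))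
    (dφ := fun y => (2 * Q y + y * dQ y) / √(2 * Q y)) hδ (by simp) (fun y hy => ?_) ?_
    (fun y hy => div_pos (hδQ y hy).2 (hsqpos y hy)) (fun y hy => ?_)
  · refine ((hasDerivAt_id' y).mul (((hQ y).const_mul 2).sqrt ?_)).congr_deriv ?_
    · exact (hsqpos y hy).ne' ∘ fun h => by simp [h]
    · have := (hsqpos y hy).ne'
      field_simp
      linear_combination (hsq y hy)
  · exact hR.continuousOn.div
      (continuous_const.mul hQc).sqrt.continuousOn fun y hy => (hsqpos y hy).ne'
  · have := (hsqpos y hy).ne'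
    field_simp
    rw [hf]
    ring

theorem HasCenterAt.of_homeomorph {X Y : ℝ × ℝ → ℝ × ℝ} {p q : ℝ × ℝ}
    (hX : HasCenterAt X q) (h : ℝ × ℝ ≃ₜ ℝ × ℝ) (hpq : h p = q) (hY : Y p = 0)
    (hXY : ∀ γ : ℝ → ℝ × ℝ, (∀ t, HasDerivAt γ (X (γ t)) t) →
      ∀ t, HasDerivAt (h.symm ∘ γ) (Y (h.symm (γ t))) t) :
    HasCenterAt Y p := by
  subst hpq
  obtain ⟨-, ε, hε, horbit⟩ := hX
  obtain ⟨ε', hε', hcont⟩ := Metric.continuousAt_iff.1 h.continuous.continuousAt ε hε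
  refine ⟨hY, ε', hε', fun z hz hzε => ?_⟩
  rw [← dist_eq_norm] at hzε
  obtain ⟨γ, T, hT, hγ0, hγ, hγT, t₁, t₂, hne⟩ :=
    horbit (h z) (h.injective.ne hz) (by simpa [dist_eq_norm] using hcont hzε)
  exact ⟨h.symm ∘ γ, T, hT, by simp [hγ0], hXY γ hγ, by simp [hγT], t₁, t₂,
    h.symm.injective.ne hne⟩

def shearHomeomorph (P : ℝ → ℝ) (hP : Continuous P) : ℝ × ℝ ≃ₜ ℝ × ℝ where
  toFun z := (z.1 + P z.2, z.2)
  invFun z := (z.1 - P z.2, z.2)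
  left_inv z := by simp
  right_inv z := by simp
  continuous_toFun := by fun_prop
  continuous_invFun := by fun_prop

theorem HasCenterAt.of_shear {g P dP : ℝ → ℝ} (hP : ∀ y, HasDerivAt P (dP y) y) (hP0 : P 0 = 0)
    (hc : HasCenterAt (fun p => (g p.2 - dP p.2 * P p.2, -p.1)) (0, 0)) :
    HasCenterAt (fun p => (g p.2 + dP p.2 * p.1, -p.1 - P p.2)) (0, 0) := by
  have hPc : Continuous P := continuous_iff_continuousAt.2 fun y => (hP y).continuousAt
  refine hc.of_homeomorph (shearHomeomorph P hPc) (by simp [shearHomeomorph, hP0]) ?_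
    fun γ hγ t => ?_
  · have hg0 : g 0 = 0 := by simpa [hP0] using congrArg Prod.fst hc.1
    simp [hg0, hP0]
  · simp only [shearHomeomorph, Homeomorph.homeomorph_mk_coe_symm, Equiv.coe_fn_symm_mk]
    have h1 := hasFDerivAt_fst.comp_hasDerivAt t (hγ t)
    have h2 := hasFDerivAt_snd.comp_hasDerivAt t (hγ t)
    simp only [ContinuousLinearMap.coe_fst', ContinuousLinearMap.coe_snd'] at h1 h2
    refine (h1.sub ((hP _).comp t h2)).prodMk h2 |>.congr_deriv ?_
    simp only [Function.comp_apply]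
    ext <;> ring

/-- Hamiltonian case: if `a₀ = b₁`, `c₁ - a₀ b₁ > 0` and `a₁ = 2 b₂`, then the
Liénard-type vector field `Y` has a center at the origin. -/
theorem center_Hamiltonian_case (a0 a1 b1 b2 c1 c2 c3 : ℝ)
    (h1 : a0 = b1) (h2 : c1 - a0*b1 > 0) (h3 : a1 = 2*b2) :
    HasCenterAt (fun p : ℝ × ℝ =>
        ((c1*p.2 + c2*p.2^2 + c3*p.2^3) + (a0 + a1*p.2)*p.1,
         -p.1 - (b1*p.2 + b2*p.2^2))) (0, 0) := by
  subst h1 h3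
  refine HasCenterAt.of_shear (g := fun y => c1 * y + c2 * y ^ 2 + c3 * y ^ 3)
    (P := fun y => a0 * y + b2 * y ^ 2) (dP := fun y => a0 + 2 * b2 * y)
    (fun y => (((hasDerivAt_id' y).const_mul a0).fun_add
      ((hasDerivAt_pow 2 y).const_mul b2)).congr_deriv (by norm_num; ring)) (by simp) ?_
  refine hasCenterAt_newton_of_potential
    (f := fun y => c1 * y + c2 * y ^ 2 + c3 * y ^ 3 - (a0 + 2 * b2 * y) * (a0 * y + b2 * y ^ 2))
    (Q := fun y => c1 / 2 + c2 / 3 * y + c3 / 4 * y ^ 2 - (a0 + b2 * y) ^ 2 / 2)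
    (dQ := fun y => c2 / 3 + c3 / 2 * y - b2 * (a0 + b2 * y))
    (fun y => ((((hasDerivAt_id' y).const_mul (c2 / 3)).const_add (c1 / 2)).fun_add
      ((hasDerivAt_pow 2 y).const_mul (c3 / 4))).fun_sub
      ((((hasDerivAt_id' y).const_mul b2).const_add a0).fun_pow 2 |>.div_const 2)
      |>.congr_deriv (by norm_num; ring))
    (by fun_prop) (by nlinarith) (fun y => by ring)
end

section
/- If a₀ = b₁, c₁ - a₀ b₁ > 0 and c₂ = a₀ (a₁ + b₂) (the pull-back case), then the vector field Y has a center at the origin. -/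
/-!
The substitution `u = ξ + b₁ y + b₂ y²` is a homeomorphism of the plane carrying orbits of the
reduced field `y' = -u, u' = ω² y + k y u + E y³` to orbits of `Y`, where `ω² = c₁ - a₀ b₁`,
`k = a₁ - 2 b₂`, `E = c₃ - a₁ b₂`; the conditions `a₀ = b₁` and `c₂ = a₀ (a₁ + b₂)` are exactly what
kills the remaining terms. The reduced field is reversible: it is invariant under
`(y, u, t) ↦ (-y, u, -t)`. In the coordinates `y = r cos θ`, `u = ω r sin θ` its orbits near the
origin are graphs `r = ρ θ` of `dr/dθ = F θ r`, where `F` is `2π`-periodic in `θ` and odd under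
`θ ↦ π - θ`. By uniqueness of solutions, `ρ` is symmetric about `π/2` and about `3π/2`, hence
`2π`-periodic, so every orbit close to the origin is closed.
-/

open Real Set Metric Filter Topology Function
open scoped NNReal

theorem apply_toIcoMod_eq_of_periodicOn {α : Type*} {f : ℝ → α} {a p : ℝ} (hp : 0 < p)
    (hfp : ∀ t ∈ Ioo (a - p / 2) (a + p / 2), f (t + p) = f t) {u : ℝ}
    (hu : u ∈ Ioo (a - p / 2) (a + p + p / 2)) : f (toIcoMod hp a u) = f u := by
  rcases lt_or_ge u a with hua | hua
  · rw [← toIcoMod_add_right, (toIcoMod_eq_self hp).2 ⟨by linarith [hu.1], by linarith⟩]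
    exact hfp u ⟨hu.1, by linarith⟩
  rcases lt_or_ge u (a + p) with hup | hup
  · rw [(toIcoMod_eq_self hp).2 ⟨hua, hup⟩]
  · rw [← toIcoMod_sub, (toIcoMod_eq_self hp).2 ⟨by linarith, by linarith [hu.2]⟩]
    simpa using (hfp (u - p) ⟨by linarith, by linarith [hu.2]⟩).symm

section

variable {E : Type*} [NormedAddCommGroup E] [NormedSpace ℝ E]

theorem IsPicardLindelof.exists_eq_forall_mem_Icc_mem_closedBall_hasDerivWithinAt₀
    [CompleteSpace E] {f : ℝ → E → E} {tmin tmax : ℝ} {t₀ : Icc tmin tmax} {x₀ : E}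
    {a L K : ℝ≥0} (hf : IsPicardLindelof f t₀ x₀ a 0 L K) :
    ∃ α : ℝ → E, α t₀ = x₀ ∧ ∀ t ∈ Icc tmin tmax,
      α t ∈ closedBall x₀ a ∧ HasDerivWithinAt α (f t (α t)) (Icc tmin tmax) t := by
  obtain ⟨α, hα⟩ := ODE.FunSpace.exists_isFixedPt_next hf (mem_closedBall_self le_rfl)
  refine ⟨α.compProj, by rw [ODE.FunSpace.compProj_val, ← hα, ODE.FunSpace.next_apply₀],
    fun t ht ↦ ⟨α.compProj_mem_closedBall hf.mul_max_le, ?_⟩⟩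
  apply ODE.hasDerivWithinAt_picard_Icc t₀.2 hf.continuousOn_uncurry
    α.continuous_compProj.continuousOn (fun _ _ ↦ α.compProj_mem_closedBall hf.mul_max_le)
    x₀ ht |>.congr_of_mem _ ht
  intro t' ht'
  nth_rw 1 [← hα]
  rw [ODE.FunSpace.compProj_of_mem ht', ODE.FunSpace.next_apply]

variable {v : ℝ → E → E} {s : Set E} {K : ℝ≥0} {f : ℝ → E}

theorem ODE.eqOn_reflect_of_odd {c a : ℝ} (ha : 0 < a) (hv : ∀ t, LipschitzOnWith K (v t) s)
    (hodd : ∀ t x, v (2 * c - t) x = -v t x)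
    (hf : ∀ t ∈ Icc (c - a) (c + a), HasDerivAt f (v t (f t)) t)
    (hfs : ∀ t ∈ Icc (c - a) (c + a), f t ∈ s) :
    EqOn (fun t ↦ f (2 * c - t)) f (Icc (c - a) (c + a)) := by
  have hrefl : ∀ t ∈ Icc (c - a) (c + a), 2 * c - t ∈ Icc (c - a) (c + a) :=
    fun t ht ↦ ⟨by linarith [ht.2], by linarith [ht.1]⟩
  have hg : ∀ t ∈ Icc (c - a) (c + a),
      HasDerivAt (fun t ↦ f (2 * c - t)) (v t (f (2 * c - t))) t := fun t ht ↦ by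
    simpa [hodd] using (hf _ (hrefl t ht)).comp_const_sub (2 * c) t
  refine ODE_solution_unique_of_mem_Icc (s := fun _ ↦ s) (t₀ := c) (fun t _ ↦ hv t)
    ⟨by linarith, by linarith⟩ (fun t ht ↦ (hg t ht).continuousAt.continuousWithinAt)
    (fun t ht ↦ hg t (Ioo_subset_Icc_self ht))
    (fun t ht ↦ hfs _ (hrefl t (Ioo_subset_Icc_self ht)))
    (fun t ht ↦ (hf t ht).continuousAt.continuousWithinAt)
    (fun t ht ↦ hf t (Ioo_subset_Icc_self ht)) (fun t ht ↦ hfs t (Ioo_subset_Icc_self ht)) ?_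
  simp only [two_mul, add_sub_cancel_right]

theorem exists_periodic_hasDerivAt_of_periodicOn {a p : ℝ} (hp : 0 < p) (hv : v.Periodic p)
    (hf : ∀ t ∈ Ico a (a + p), HasDerivAt f (v t (f t)) t)
    (hfp : ∀ t ∈ Ioo (a - p / 2) (a + p / 2), f (t + p) = f t) :
    ∃ g : ℝ → E, g.Periodic p ∧ EqOn g f (Ico a (a + p)) ∧ range g ⊆ f '' Ico a (a + p) ∧
      ∀ t, HasDerivAt g (v t (g t)) t := by
  refine ⟨fun t ↦ f (toIcoMod hp a t), fun t ↦ by simp only [toIcoMod_add_right],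
    fun t ht ↦ by simp only [(toIcoMod_eq_self hp).2 ht],
    range_subset_iff.2 fun t ↦ mem_image_of_mem f (toIcoMod_mem_Ico hp a t), fun t ↦ ?_⟩
  set n := toIcoDiv hp a t
  have hs := toIcoMod_mem_Ico hp a t
  have hts : toIcoMod hp a t = t - n • p := rfl
  have hloc : (fun t' ↦ f (toIcoMod hp a t')) =ᶠ[𝓝 t] fun t' ↦ f (t' - n • p) := by
    filter_upwards [Ioo_mem_nhds (show t - p / 2 < t by linarith) (show t < t + p / 2 by linarith)]
      with t' ht'
    rw [← toIcoMod_sub_zsmul hp a t' n]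
    exact apply_toIcoMod_eq_of_periodicOn hp hfp
      ⟨by linarith [ht'.1, hs.1], by linarith [ht'.2, hs.2]⟩
  have hder := (hf _ hs).comp_sub_const t (n • p)
  rw [hts, hv.sub_zsmul_eq] at hder
  show HasDerivAt _ (v t (f (toIcoMod hp a t))) t
  rw [hts]
  exact hder.congr_of_eventuallyEq hloc

theorem ODE.exists_periodic_solution_of_odd {c q : ℝ} (hq : 0 < q) (hper : v.Periodic (2 * q))
    (hodd : ∀ t x, v (2 * c - t) x = -v t x) (hv : ∀ t, LipschitzOnWith K (v t) s)
    (hf : ∀ t ∈ Icc (c - q) (c + 3 * q), HasDerivAt f (v t (f t)) t)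
    (hfs : ∀ t ∈ Icc (c - q) (c + 3 * q), f t ∈ s) :
    ∃ g : ℝ → E, g.Periodic (2 * q) ∧ EqOn g f (Ico c (c + 2 * q)) ∧ range g ⊆ s ∧
      ∀ t, HasDerivAt g (v t (g t)) t := by
  have hodd' : ∀ t x, v (2 * (c + q) - t) x = -v t x := fun t x ↦ by
    rw [show 2 * (c + q) - t = 2 * c - t + 2 * q by ring, hper, hodd]
  have hsub : Icc (c - q) (c + q) ⊆ Icc (c - q) (c + 3 * q) := Icc_subset_Icc_right (by linarith)
  have hsub' : Icc (c + q - 2 * q) (c + q + 2 * q) = Icc (c - q) (c + 3 * q) := by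
    congr 1 <;> ring
  have hsymm₁ := ODE.eqOn_reflect_of_odd hq hv hodd (fun t ht ↦ hf t (hsub ht))
    fun t ht ↦ hfs t (hsub ht)
  have hsymm₂ := ODE.eqOn_reflect_of_odd (by positivity) hv hodd'
    (fun t ht ↦ hf t (hsub' ▸ ht)) fun t ht ↦ hfs t (hsub' ▸ ht)
  have hfp : ∀ t ∈ Ioo (c - 2 * q / 2) (c + 2 * q / 2), f (t + 2 * q) = f t := by
    rw [mul_div_cancel_left₀ q two_ne_zero]
    intro t ht
    have h₁ := hsymm₁ (Ioo_subset_Icc_self ht)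
    have h₂ := hsymm₂ (show 2 * c - t ∈ Icc (c + q - 2 * q) (c + q + 2 * q) from
      ⟨by linarith [ht.2], by linarith [ht.1]⟩)
    simp only at h₁ h₂
    rw [← h₁, ← h₂]
    congr 1
    ring
  obtain ⟨g, hgper, hgf, hgrange, hg⟩ := exists_periodic_hasDerivAt_of_periodicOn (by positivity)
    hper (fun t ht ↦ hf t ⟨by linarith [ht.1], by linarith [ht.2]⟩) hfp
  exact ⟨g, hgper, hgf, hgrange.trans (image_subset_iff.2 fun t ht ↦
    hfs t ⟨by linarith [ht.1], by linarith [ht.2]⟩), hg⟩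

end

theorem exists_lipschitzOnWith_of_periodic {E F : Type*} [NormedAddCommGroup E]
    [NormedSpace ℝ E] [NormedAddCommGroup F] [NormedSpace ℝ F] {v : ℝ → E → F} {p : ℝ}
    {s : Set E} (hp : 0 < p) (hper : v.Periodic p) (hs : Convex ℝ s) (hs' : IsCompact s)
    (hv : ContDiffOn ℝ 1 (fun x : ℝ × E ↦ v x.1 x.2) (Icc 0 p ×ˢ s)) :
    ∃ K, ∀ t, LipschitzOnWith K (v t) s := by
  obtain ⟨K, hK⟩ := hv.exists_lipschitzOnWith one_ne_zero ((convex_Icc 0 p).prod hs)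
    (isCompact_Icc.prod hs')
  refine ⟨K, fun t ↦ ?_⟩
  obtain ⟨t', ht', hvt⟩ := hper.exists_mem_Ico₀ hp t
  have := hK.comp ((LipschitzWith.prodMk_left t').lipschitzOnWith (s := s))
    fun x hx ↦ mk_mem_prod (Ico_subset_Icc_self ht') hx
  rw [mul_one] at this
  rw [hvt]
  exact this

theorem exists_hasDerivAt_comp_of_periodic_of_pos {D : ℝ → ℝ} {p : ℝ} (hp : 0 < p)
    (hD : Continuous D) (hpos : ∀ θ, 0 < D θ) (hper : D.Periodic p) (θ₀ : ℝ) :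
    ∃ φ : ℝ → ℝ, ∃ T > 0, φ 0 = θ₀ ∧ φ T = θ₀ + p ∧ ∀ t, HasDerivAt φ (D (φ t)) t := by
  set τ : ℝ → ℝ := fun θ ↦ ∫ x in 0..θ, (D x)⁻¹
  have hDinv : Continuous fun θ ↦ (D θ)⁻¹ := hD.inv₀ fun θ ↦ (hpos θ).ne'
  have hτ : ∀ θ, HasDerivAt τ (D θ)⁻¹ θ := fun θ ↦
    (hDinv.integral_hasStrictDerivAt 0 θ).hasDerivAt
  have hτc : Continuous τ := continuous_iff_continuousAt.2 fun θ ↦ (hτ θ).continuousAt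
  have hmono : StrictMono τ := strictMono_of_hasDerivAt_pos hτ fun θ ↦ inv_pos.2 (hpos θ)
  have hsurj : Surjective τ := by
    have hper' : (fun θ ↦ (D θ)⁻¹).Periodic p := fun θ ↦ by simp only [hper θ]
    exact hτc.surjective
      (hper'.tendsto_atTop_intervalIntegral_of_pos' (hDinv.intervalIntegrable _ _)
        (fun θ ↦ inv_pos.2 (hpos θ)) hp)
      (hper'.tendsto_atBot_intervalIntegral_of_pos' (hDinv.intervalIntegrable _ _)
        (fun θ ↦ inv_pos.2 (hpos θ)) hp)
  set e := hmono.orderIsoOfSurjective τ hsurj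
  have hτe : ∀ y, τ (e.symm y) = y := e.apply_symm_apply
  have he : ∀ y, HasDerivAt e.symm (D (e.symm y)) y := fun y ↦ by
    simpa using (hτ (e.symm y)).of_local_left_inverse e.symm.continuous.continuousAt
      (inv_ne_zero (hpos _).ne') (Eventually.of_forall hτe)
  refine ⟨fun t ↦ e.symm (t + τ θ₀), τ (θ₀ + p) - τ θ₀,
    sub_pos.2 (hmono (lt_add_of_pos_right θ₀ hp)), ?_, ?_, fun t ↦ ?_⟩
  · simp only [zero_add]
    exact e.symm_apply_apply θ₀
  · simp only [sub_add_cancel]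
    exact e.symm_apply_apply (θ₀ + p)
  · exact (he _).comp_add_const t (τ θ₀)

def HasPeriodicOrbitThrough (X : ℝ × ℝ → ℝ × ℝ) (z : ℝ × ℝ) : Prop :=
  ∃ (γ : ℝ → ℝ × ℝ) (T : ℝ), 0 < T ∧ γ 0 = z ∧
    (∀ t : ℝ, HasDerivAt γ (X (γ t)) t) ∧ γ T = z ∧ (∃ t₁ t₂ : ℝ, γ t₁ ≠ γ t₂)

theorem hasCenterAt_iff {X : ℝ × ℝ → ℝ × ℝ} {p : ℝ × ℝ} :
    HasCenterAt X p ↔ X p = 0 ∧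
      ∃ ε > 0, ∀ z : ℝ × ℝ, z ≠ p → ‖z - p‖ < ε → HasPeriodicOrbitThrough X z :=
  Iff.rfl

theorem HasCenterAt.map_homeomorph {X Z : ℝ × ℝ → ℝ × ℝ} {q : ℝ × ℝ} (hZ : HasCenterAt Z q)
    (Ψ : ℝ × ℝ ≃ₜ ℝ × ℝ) (hΨ : ∀ (γ : ℝ → ℝ × ℝ) (t : ℝ),
      HasDerivAt γ (Z (γ t)) t → HasDerivAt (Ψ ∘ γ) (X (Ψ (γ t))) t) :
    HasCenterAt X (Ψ q) := by
  rw [hasCenterAt_iff] at hZ ⊢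
  obtain ⟨hZq, ε, hε, hZε⟩ := hZ
  refine ⟨?_, ?_⟩
  · have := hΨ (fun _ ↦ q) 0 (by simpa [hZq] using hasDerivAt_const (0 : ℝ) q)
    exact this.unique (hasDerivAt_const 0 (Ψ q))
  obtain ⟨δ, hδ, hΨδ⟩ := Metric.continuousAt_iff.1 Ψ.symm.continuous.continuousAt ε hε
  refine ⟨δ, hδ, fun z hz hzδ ↦ ?_⟩
  have hzq : Ψ.symm z ≠ q := fun h ↦ hz (by rw [← h, Ψ.apply_symm_apply])
  have hzε : ‖Ψ.symm z - q‖ < ε := by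
    simpa [dist_eq_norm] using hΨδ (show dist z (Ψ q) < δ by rwa [dist_eq_norm])
  obtain ⟨γ, T, hT, hγ0, hγ, hγT, t₁, t₂, hne⟩ := hZε _ hzq hzε
  refine ⟨Ψ ∘ γ, T, hT, by simp [hγ0], fun t ↦ hΨ γ t (hγ t), by simp [hγT],
    t₁, t₂, fun h ↦ hne (Ψ.injective h)⟩

def reducedField (ω k E : ℝ) (w : ℝ × ℝ) : ℝ × ℝ :=
  (-w.2, ω ^ 2 * w.1 + k * w.1 * w.2 + E * w.1 ^ 3)

noncomputable section Polar

variable (ω k e : ℝ)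

/- In the coordinates `y = r cos θ`, `u = ω r sin θ`, the reduced field `reducedField ω k (e * ω)`
reads `r' = radialSpeed k e θ r`, `θ' = angularSpeed ω k e θ r` (see `hasDerivAt_polarCurve`). -/
def angularSpeed (θ r : ℝ) : ℝ := ω + k * r * cos θ ^ 2 * sin θ + e * r ^ 2 * cos θ ^ 4

def radialSpeed (θ r : ℝ) : ℝ := k * r ^ 2 * cos θ * sin θ ^ 2 + e * r ^ 3 * cos θ ^ 3 * sin θ

def polarField (θ r : ℝ) : ℝ := radialSpeed k e θ r / angularSpeed ω k e θ r

theorem polarField_periodic : (polarField ω k e).Periodic (2 * π) := fun θ ↦ by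
  ext r
  simp only [polarField, radialSpeed, angularSpeed, cos_add_two_pi, sin_add_two_pi]

theorem polarField_pi_sub (θ r : ℝ) : polarField ω k e (π - θ) r = -polarField ω k e θ r := by
  simp only [polarField, radialSpeed, angularSpeed, cos_pi_sub, sin_pi_sub]
  ring

theorem contDiff_angularSpeed : ContDiff ℝ 1 fun x : ℝ × ℝ ↦ angularSpeed ω k e x.1 x.2 := by
  unfold angularSpeed; fun_prop

theorem contDiff_radialSpeed : ContDiff ℝ 1 fun x : ℝ × ℝ ↦ radialSpeed k e x.1 x.2 := by
  unfold radialSpeed; fun_prop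

variable {ω k e} {θ r : ℝ}

theorem abs_radialSpeed_le (hr : 0 ≤ r) (hr1 : r ≤ 1) :
    |radialSpeed k e θ r| ≤ (|k| + |e|) * r ^ 2 := by
  have hc := abs_cos_le_one θ
  have hs := abs_sin_le_one θ
  have hr3 : r ^ 3 ≤ r ^ 2 := pow_le_pow_of_le_one hr hr1 (by norm_num)
  calc |radialSpeed k e θ r|
      ≤ |k| * r ^ 2 * |cos θ| * |sin θ| ^ 2 + |e| * r ^ 3 * |cos θ| ^ 3 * |sin θ| := by
        unfold radialSpeed
        refine (abs_add_le _ _).trans_eq ?_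
        simp only [abs_mul, abs_pow, abs_of_nonneg hr]
    _ ≤ |k| * r ^ 2 * 1 * 1 ^ 2 + |e| * r ^ 2 * 1 ^ 3 * 1 := by gcongr
    _ = (|k| + |e|) * r ^ 2 := by ring

theorem abs_angularSpeed_sub_le (hr : 0 ≤ r) (hr1 : r ≤ 1) :
    |angularSpeed ω k e θ r - ω| ≤ (|k| + |e|) * r := by
  have hc := abs_cos_le_one θ
  have hs := abs_sin_le_one θ
  have hr2 : r ^ 2 ≤ r := by nlinarith
  calc |angularSpeed ω k e θ r - ω|
      ≤ |k| * r * |cos θ| ^ 2 * |sin θ| + |e| * r ^ 2 * |cos θ| ^ 4 := by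
        rw [show angularSpeed ω k e θ r - ω = k * r * cos θ ^ 2 * sin θ + e * r ^ 2 * cos θ ^ 4 by
          unfold angularSpeed; ring]
        refine (abs_add_le _ _).trans_eq ?_
        simp only [abs_mul, abs_pow, abs_of_nonneg hr]
    _ ≤ |k| * r * 1 ^ 2 * 1 + |e| * r * 1 ^ 4 := by gcongr
    _ = (|k| + |e|) * r := by ring

theorem half_le_angularSpeed (hr : 0 ≤ r) (hr1 : r ≤ 1) (hsmall : 2 * (|k| + |e|) * r ≤ ω) :
    ω / 2 ≤ angularSpeed ω k e θ r := by
  have := (abs_le.1 (abs_angularSpeed_sub_le (ω := ω) (k := k) (e := e) (θ := θ) hr hr1)).1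
  linarith

theorem abs_polarField_le (hω : 0 < ω) (hr : 0 ≤ r) (hr1 : r ≤ 1)
    (hsmall : 2 * (|k| + |e|) * r ≤ ω) :
    |polarField ω k e θ r| ≤ 2 * (|k| + |e|) * r ^ 2 / ω := by
  have hD := half_le_angularSpeed (θ := θ) hr hr1 hsmall
  have hpos : 0 < angularSpeed ω k e θ r := by linarith
  rw [polarField, abs_div, abs_of_pos hpos, div_le_div_iff₀ hpos hω]
  nlinarith [abs_radialSpeed_le (k := k) (e := e) (θ := θ) hr hr1, abs_nonneg (radialSpeed k e θ r)]

theorem hasDerivAt_polarCurve {R φ : ℝ → ℝ} {t : ℝ}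
    (hR : HasDerivAt R (radialSpeed k e (φ t) (R t)) t)
    (hφ : HasDerivAt φ (angularSpeed ω k e (φ t) (R t)) t) :
    HasDerivAt (fun s ↦ (R s * cos (φ s), ω * (R s * sin (φ s))))
      (reducedField ω k (e * ω) (R t * cos (φ t), ω * (R t * sin (φ t)))) t := by
  convert (hR.mul (hφ.cos)).prodMk ((hR.mul hφ.sin).const_mul ω) using 1
  · rfl
  have hcs := sin_sq_add_cos_sq (φ t)
  simp only [reducedField, radialSpeed, angularSpeed, Prod.mk.injEq]
  constructor
  · ring
  · linear_combination (-(ω * k * R t ^ 2 * cos (φ t) * sin (φ t)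
      + ω * e * R t ^ 3 * cos (φ t) ^ 3)) * hcs

end Polar

section PolarSolution

variable {ω k e r₀ : ℝ}

theorem polar_bounds_of_mem_closedBall (hω : 0 < ω) (hr₀1 : r₀ ≤ 1 / 2)
    (hsmall : 36 * π * (|k| + |e|) * r₀ ≤ ω) {r : ℝ} (hr : r ∈ closedBall r₀ (r₀ / 2))
    (θ : ℝ) : ω / 2 ≤ angularSpeed ω k e θ r ∧
      |polarField ω k e θ r| ≤ 9 * (|k| + |e|) * r₀ ^ 2 / (2 * ω) := by
  rw [Real.closedBall_eq_Icc] at hr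
  have hM : 0 ≤ |k| + |e| := by positivity
  have hr0 : 0 ≤ r := by linarith [hr.1, hr.2]
  have hr1 : r ≤ 1 := by linarith [hr.2]
  have hMr₀ : 0 ≤ (|k| + |e|) * r₀ := mul_nonneg hM (by linarith [hr.1, hr.2])
  have hr2 : 2 * (|k| + |e|) * r ≤ ω := by
    nlinarith [pi_gt_three, mul_le_mul_of_nonneg_left hr.2 hM]
  refine ⟨half_le_angularSpeed hr0 hr1 hr2, (abs_polarField_le hω hr0 hr1 hr2).trans ?_⟩
  rw [div_le_div_iff₀ hω (by positivity)]
  have hsq : r ^ 2 ≤ (r₀ + r₀ / 2) ^ 2 := pow_le_pow_left₀ hr0 hr.2 2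
  nlinarith [mul_le_mul_of_nonneg_left hsq (mul_nonneg hM hω.le)]

theorem exists_lipschitzOnWith_polarField (hω : 0 < ω) (hr₀1 : r₀ ≤ 1 / 2)
    (hsmall : 36 * π * (|k| + |e|) * r₀ ≤ ω) :
    ∃ K, ∀ θ, LipschitzOnWith K (polarField ω k e θ) (closedBall r₀ (r₀ / 2)) := by
  refine exists_lipschitzOnWith_of_periodic two_pi_pos (polarField_periodic ω k e)
    (convex_closedBall _ _) (isCompact_closedBall _ _) ?_
  refine (contDiff_radialSpeed k e).contDiffOn.div (contDiff_angularSpeed ω k e).contDiffOn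
    fun x hx ↦ ?_
  have := (polar_bounds_of_mem_closedBall hω hr₀1 hsmall (mem_prod.1 hx).2 x.1).1
  exact (lt_of_lt_of_le (half_pos hω) this).ne'

theorem exists_polarField_solution (hω : 0 < ω) (hr₀ : 0 < r₀) (hr₀1 : r₀ ≤ 1 / 2)
    (hsmall : 36 * π * (|k| + |e|) * r₀ ≤ ω) (θ₀ : ℝ) :
    ∃ f : ℝ → ℝ, f θ₀ = r₀ ∧ ∀ θ ∈ Ioo (θ₀ - 4 * π) (θ₀ + 4 * π),
      f θ ∈ closedBall r₀ (r₀ / 2) ∧ HasDerivAt f (polarField ω k e θ (f θ)) θ := by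
  obtain ⟨K, hK⟩ := exists_lipschitzOnWith_polarField (k := k) (e := e) hω hr₀1 hsmall
  -- `36 π` is what makes the bound on `polarField` times the half-length `4 π` at most `r₀ / 2`.
  have hpl : IsPicardLindelof (polarField ω k e)
      (⟨θ₀, by constructor <;> linarith [pi_pos]⟩ : Icc (θ₀ - 4 * π) (θ₀ + 4 * π)) r₀
      ⟨r₀ / 2, by positivity⟩ 0 ⟨9 * (|k| + |e|) * r₀ ^ 2 / (2 * ω), by positivity⟩ K := by
    refine ⟨fun θ _ ↦ hK θ, fun x hx ↦ ?_,
      fun θ _ x hx ↦ (polar_bounds_of_mem_closedBall hω hr₀1 hsmall hx θ).2, ?_⟩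
    · have hD : ∀ θ, angularSpeed ω k e θ x ≠ 0 := fun θ ↦
        (lt_of_lt_of_le (half_pos hω) (polar_bounds_of_mem_closedBall hω hr₀1 hsmall hx θ).1).ne'
      have hpair : Continuous fun θ : ℝ ↦ (θ, x) := continuous_id.prodMk continuous_const
      exact (((contDiff_radialSpeed k e).continuous.comp hpair).div
        ((contDiff_angularSpeed ω k e).continuous.comp hpair) hD).continuousOn
    · show 9 * (|k| + |e|) * r₀ ^ 2 / (2 * ω) * max (θ₀ + 4 * π - θ₀) (θ₀ - (θ₀ - 4 * π))
        ≤ r₀ / 2 - 0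
      rw [add_sub_cancel_left, sub_sub_cancel, max_self, sub_zero, div_mul_eq_mul_div,
        div_le_div_iff₀ (by positivity) two_pos]
      nlinarith [sq_nonneg r₀]
  obtain ⟨f, hf₀, hf⟩ := hpl.exists_eq_forall_mem_Icc_mem_closedBall_hasDerivWithinAt₀
  refine ⟨f, hf₀, fun θ hθ ↦ ⟨(hf θ (Ioo_subset_Icc_self hθ)).1, ?_⟩⟩
  exact (hf θ (Ioo_subset_Icc_self hθ)).2.hasDerivAt (Icc_mem_nhds hθ.1 hθ.2)

theorem exists_periodic_polarField_solution (hω : 0 < ω) (hr₀ : 0 < r₀) (hr₀1 : r₀ ≤ 1 / 2)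
    (hsmall : 36 * π * (|k| + |e|) * r₀ ≤ ω) (θ₀ : ℝ) :
    ∃ ρ : ℝ → ℝ, ρ.Periodic (2 * π) ∧ ρ θ₀ = r₀ ∧ (∀ θ, ρ θ ∈ closedBall r₀ (r₀ / 2)) ∧
      ∀ θ, HasDerivAt ρ (polarField ω k e θ (ρ θ)) θ := by
  obtain ⟨f, hf₀, hf⟩ := exists_polarField_solution (k := k) (e := e) hω hr₀ hr₀1 hsmall θ₀
  obtain ⟨K, hK⟩ := exists_lipschitzOnWith_polarField (k := k) (e := e) hω hr₀1 hsmall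
  obtain ⟨n, hn, -⟩ := existsUnique_sub_zsmul_mem_Ico two_pi_pos θ₀ (π / 2)
  set c := π / 2 + n • (2 * π)
  have hodd : ∀ θ x, polarField ω k e (2 * c - θ) x = -polarField ω k e θ x := fun θ x ↦ by
    have := congrFun ((polarField_periodic ω k e).int_mul (2 * n) (π - θ)) x
    rw [polarField_pi_sub] at this
    rw [← this]
    congr 1
    simp only [c, zsmul_eq_mul]
    push_cast
    ring
  have hwin : ∀ θ ∈ Icc (c - π) (c + 3 * π), θ ∈ Ioo (θ₀ - 4 * π) (θ₀ + 4 * π) := by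
    intro θ hθ
    rw [mem_Ico, zsmul_eq_mul] at hn
    have := pi_pos
    constructor <;> simp only [c, zsmul_eq_mul] at hθ <;> linarith [hθ.1, hθ.2, hn.1, hn.2]
  obtain ⟨ρ, hρper, hρf, hρs, hρ⟩ := ODE.exists_periodic_solution_of_odd pi_pos
    (polarField_periodic ω k e) hodd hK (fun θ hθ ↦ (hf θ (hwin θ hθ)).2)
    fun θ hθ ↦ (hf θ (hwin θ hθ)).1
  refine ⟨ρ, hρper, ?_, fun θ ↦ hρs (mem_range_self θ), hρ⟩
  rw [hρf, hf₀]
  rw [mem_Ico, zsmul_eq_mul] at hn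
  simp only [c, zsmul_eq_mul, mem_Ico]
  constructor <;> linarith [hn.1, hn.2]

theorem hasPeriodicOrbitThrough_reducedField_polar (hω : 0 < ω) {r₀ : ℝ} (hr₀ : 0 < r₀)
    (hr₀1 : r₀ ≤ 1 / 2) (hsmall : 36 * π * (|k| + |e|) * r₀ ≤ ω) (θ₀ : ℝ) :
    HasPeriodicOrbitThrough (reducedField ω k (e * ω)) (r₀ * cos θ₀, ω * (r₀ * sin θ₀)) := by
  obtain ⟨ρ, hρper, hρ₀, hρball, hρ⟩ :=
    exists_periodic_polarField_solution (k := k) (e := e) hω hr₀ hr₀1 hsmall θ₀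
  have hD : ∀ θ, 0 < angularSpeed ω k e θ (ρ θ) := fun θ ↦
    (half_pos hω).trans_le (polar_bounds_of_mem_closedBall hω hr₀1 hsmall (hρball θ) θ).1
  have hρc : Continuous ρ := continuous_iff_continuousAt.2 fun θ ↦ (hρ θ).continuousAt
  obtain ⟨φ, T, hT, hφ₀, hφT, hφ⟩ := exists_hasDerivAt_comp_of_periodic_of_pos
    (D := fun θ ↦ angularSpeed ω k e θ (ρ θ)) two_pi_pos
    ((contDiff_angularSpeed ω k e).continuous.comp (continuous_id.prodMk hρc)) hD
    (fun θ ↦ by simp only [hρper θ, angularSpeed, cos_add_two_pi, sin_add_two_pi]) θ₀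
  have hR : ∀ t, HasDerivAt (ρ ∘ φ) (radialSpeed k e (φ t) (ρ (φ t))) t := fun t ↦ by
    have := (hρ (φ t)).comp t (hφ t)
    rwa [polarField, div_mul_cancel₀ _ (hD _).ne'] at this
  set γ : ℝ → ℝ × ℝ := fun t ↦ (ρ (φ t) * cos (φ t), ω * (ρ (φ t) * sin (φ t)))
  have hγ₀ : γ 0 = (r₀ * cos θ₀, ω * (r₀ * sin θ₀)) := by simp only [γ, hφ₀, hρ₀]
  obtain ⟨t₁, -, ht₁⟩ : ∃ t₁ ∈ Icc 0 T, φ t₁ = θ₀ + π := by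
    have hφc : Continuous φ := continuous_iff_continuousAt.2 fun t ↦ (hφ t).continuousAt
    refine intermediate_value_Icc hT.le hφc.continuousOn ?_
    rw [hφ₀, hφT]
    constructor <;> linarith [pi_pos]
  refine ⟨γ, T, hT, hγ₀, fun t ↦ hasDerivAt_polarCurve (hR t) (hφ t), ?_, t₁, 0, ?_⟩
  · simp only [γ, hφT, hρper θ₀, cos_add_two_pi, sin_add_two_pi, hρ₀]
  · rw [hγ₀]
    simp only [γ, ht₁, cos_add_pi, sin_add_pi, ne_eq, Prod.mk.injEq, not_and]
    intro hcos hsin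
    have hρ₁ : 0 < ρ (θ₀ + π) := by
      have := hρball (θ₀ + π)
      rw [Real.closedBall_eq_Icc] at this
      linarith [this.1]
    have hc : cos θ₀ = 0 := by nlinarith
    have hs : sin θ₀ = 0 := by
      have := mul_left_cancel₀ hω.ne' hsin
      nlinarith
    simpa [hc, hs] using sin_sq_add_cos_sq θ₀

end PolarSolution

theorem hasCenterAt_reducedField {ω : ℝ} (hω : 0 < ω) (k E : ℝ) :
    HasCenterAt (reducedField ω k E) (0, 0) := by
  set e := E / ω
  set r := min (1 / 2) (ω / (36 * π * (|k| + |e| + 1)))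
  have hr : 0 < r := lt_min one_half_pos (by positivity)
  have hsmall : 36 * π * (|k| + |e|) * r ≤ ω := by
    have := (le_div_iff₀' (by positivity)).1
      (min_le_right (1 / 2) (ω / (36 * π * (|k| + |e| + 1))))
    nlinarith [pi_pos]
  refine ⟨by simp [reducedField], min r (ω * r) / 2, by positivity, fun w hw hwε ↦ ?_⟩
  set z : ℂ := ⟨w.1, w.2 / ω⟩
  rw [Prod.mk_zero_zero, sub_zero] at hwε
  have hz : z ≠ 0 := fun h ↦ hw <| Prod.ext (congrArg Complex.re h)
    ((div_eq_zero_iff.1 (congrArg Complex.im h)).resolve_right hω.ne')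
  have hzr : ‖z‖ ≤ r := by
    have h₁ : |w.1| < min r (ω * r) / 2 := (norm_fst_le w).trans_lt hwε
    have h₂ : |w.2| < min r (ω * r) / 2 := (norm_snd_le w).trans_lt hwε
    have h₃ : |w.2 / ω| ≤ r / 2 := by
      rw [abs_div, abs_of_pos hω, div_le_iff₀ hω]
      linarith [min_le_right r (ω * r)]
    linarith [Complex.norm_le_abs_re_add_abs_im z, min_le_left r (ω * r)]
  have hw : w = (‖z‖ * cos (Complex.arg z), ω * (‖z‖ * sin (Complex.arg z))) := by
    rw [Complex.norm_mul_cos_arg, Complex.norm_mul_sin_arg]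
    ext
    · rfl
    · exact (mul_div_cancel₀ _ hω.ne').symm
  rw [hw, show E = e * ω from (div_mul_cancel₀ E hω.ne').symm]
  exact hasPeriodicOrbitThrough_reducedField_polar hω (norm_pos_iff.2 hz)
    (hzr.trans (min_le_left _ _))
    ((mul_le_mul_of_nonneg_left hzr (by positivity)).trans hsmall) _

def pullbackHomeomorph (b₁ b₂ : ℝ) : ℝ × ℝ ≃ₜ ℝ × ℝ where
  toFun w := (w.2 - b₁ * w.1 - b₂ * w.1 ^ 2, w.1)
  invFun p := (p.2, p.1 + b₁ * p.2 + b₂ * p.2 ^ 2)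
  left_inv w := Prod.ext rfl (by ring)
  right_inv p := Prod.ext (by ring) rfl
  continuous_toFun := by fun_prop
  continuous_invFun := by fun_prop

theorem hasDerivAt_pullbackHomeomorph_comp {b₁ b₂ : ℝ} {γ : ℝ → ℝ × ℝ} {γ' : ℝ × ℝ} {t : ℝ}
    (hγ : HasDerivAt γ γ' t) :
    HasDerivAt (pullbackHomeomorph b₁ b₂ ∘ γ)
      (γ'.2 - b₁ * γ'.1 - b₂ * (2 * (γ t).1 * γ'.1), γ'.1) t := by
  have h₁ : HasDerivAt (Prod.fst ∘ γ) γ'.1 t := hasFDerivAt_fst.comp_hasDerivAt t hγ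
  have h₂ : HasDerivAt (Prod.snd ∘ γ) γ'.2 t := hasFDerivAt_snd.comp_hasDerivAt t hγ
  convert ((h₂.sub (h₁.const_mul b₁)).sub ((h₁.pow 2).const_mul b₂)).prodMk h₁ using 2
  · rfl
  · simp only [Function.comp_apply, Nat.cast_ofNat, pow_one, Nat.add_one_sub_one]

/-- Pull-back case: if `a₀ = b₁`, `c₁ - a₀ b₁ > 0` and `c₂ = a₀ (a₁ + b₂)`, then the
Liénard-type vector field `Y` has a center at the origin. -/
theorem center_pullback_case (a0 a1 b1 b2 c1 c2 c3 : ℝ)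
    (h1 : a0 = b1) (h2 : c1 - a0*b1 > 0) (h3 : c2 = a0*(a1 + b2)) :
    HasCenterAt (fun p : ℝ × ℝ =>
        ((c1*p.2 + c2*p.2^2 + c3*p.2^3) + (a0 + a1*p.2)*p.1,
         -p.1 - (b1*p.2 + b2*p.2^2))) (0, 0) := by
  have hω := sqrt_pos.2 h2
  have hω2 := sq_sqrt h2.le
  have h0 : pullbackHomeomorph b1 b2 (0, 0) = (0, 0) := by simp [pullbackHomeomorph]
  rw [← h0]
  refine (hasCenterAt_reducedField hω (a1 - 2 * b2) (c3 - a1 * b2)).map_homeomorph _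
    fun γ t hγ ↦ ?_
  refine (hasDerivAt_pullbackHomeomorph_comp hγ).congr_deriv ?_
  subst h1 h3
  simp only [reducedField, pullbackHomeomorph, Homeomorph.homeomorph_mk_coe, Equiv.coe_fn_mk,
    Prod.mk.injEq]
  constructor
  · linear_combination (γ t).1 * hω2
  · ring
end

section
/- Assume b30 ≠ 1, 2 a20 b11 + 2 (1 - b30)(1 + a01 + a21) > 0, 2 a20 + b11 = 0 and a21 + b12 = 0 (the Hamiltonian case). Then X has a center at (1,0) and a center at (-1,0). -/
open Real Filter Set Function Topology

theorem ContinuousLinearMap.isInvertible_of_apply_one_ne_zero {𝕜 : Type*}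
    [NontriviallyNormedField 𝕜] {f : 𝕜 →L[𝕜] 𝕜} (hf : f 1 ≠ 0) : f.IsInvertible :=
  .of_inverse (g := (f 1)⁻¹ • .id 𝕜 𝕜) (by ext; simp [hf]) (by ext; simp [hf])

section Implicit

variable {𝕜 : Type*} [NontriviallyNormedField 𝕜]
  {E₁ : Type*} [NormedAddCommGroup E₁] [NormedSpace 𝕜 E₁] [CompleteSpace E₁]
  {E₂ : Type*} [NormedAddCommGroup E₂] [NormedSpace 𝕜 E₂] [CompleteSpace E₂]
  {F : Type*} [NormedAddCommGroup F] [NormedSpace 𝕜 F] [CompleteSpace F]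

theorem HasStrictFDerivAt.differentiableAt_of_unique {G : E₁ × E₂ → F} {G' : E₁ × E₂ →L[𝕜] F}
    {ρ : E₁ → E₂} {U : Set E₂} {x : E₁} (hG : HasStrictFDerivAt G G' (x, ρ x))
    (hG' : (G' ∘L .inr 𝕜 E₁ E₂).IsInvertible) (hU : U ∈ 𝓝 (ρ x))
    (huniq : ∀ x' y, y ∈ U → G (x', y) = G (x, ρ x) → ρ x' = y) :
    DifferentiableAt 𝕜 ρ x := by
  have hψ := hG.hasStrictFDerivAt_implicitFunctionOfProdDomain hG'
  refine (hψ.differentiableAt.congr_of_eventuallyEq ?_)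
  filter_upwards [hG.eventually_apply_implicitFunctionOfProdDomain hG',
    hG.tendsto_implicitFunctionOfProdDomain hG' hU] with x' hlevel hmem
  exact huniq x' _ hmem hlevel

end Implicit

theorem exists_surjective_hasDerivAt_of_periodic {Λ : ℝ → ℝ} {T₀ : ℝ} (hΛ : Continuous Λ)
    (hpos : ∀ θ, 0 < Λ θ) (hper : Periodic Λ T₀) (hT₀ : 0 < T₀) :
    ∃ g : ℝ → ℝ, g 0 = 0 ∧ StrictMono g ∧ Surjective g ∧ ∀ t, HasDerivAt g (Λ (g t)) t := by
  have hf : Continuous fun θ => (Λ θ)⁻¹ := hΛ.inv₀ fun θ => (hpos θ).ne'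
  set F : ℝ → ℝ := fun θ => ∫ s in (0 : ℝ)..θ, (Λ s)⁻¹
  have hF : ∀ θ, HasDerivAt F (Λ θ)⁻¹ θ := fun θ =>
    intervalIntegral.integral_hasDerivAt_right (hf.intervalIntegrable _ _)
      hf.aestronglyMeasurable.stronglyMeasurableAtFilter hf.continuousAt
  have hFmono : StrictMono F := strictMono_of_hasDerivAt_pos hF fun θ => inv_pos.2 (hpos θ)
  have hFsurj : Surjective F := by
    have hper' : Periodic (fun θ => (Λ θ)⁻¹) T₀ := fun θ => by simp only [hper θ]
    exact (continuous_iff_continuousAt.2 fun θ => (hF θ).continuousAt).surjective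
      (hper'.tendsto_atTop_intervalIntegral_of_pos' (hf.intervalIntegrable _ _)
        (fun θ => inv_pos.2 (hpos θ)) hT₀)
      (hper'.tendsto_atBot_intervalIntegral_of_pos' (hf.intervalIntegrable _ _)
        (fun θ => inv_pos.2 (hpos θ)) hT₀)
  set φ := hFmono.orderIsoOfSurjective F hFsurj
  refine ⟨φ.symm, ?_, φ.symm.strictMono, φ.symm.surjective, fun t => ?_⟩
  · exact φ.symm_apply_eq.2 intervalIntegral.integral_same.symm
  · simpa using (hF (φ.symm t)).of_local_left_inverse φ.symm.continuous.continuousAt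
      (inv_pos.2 (hpos _)).ne' (Eventually.of_forall φ.apply_symm_apply)

theorem exists_periodic_orbit_of_tangent_curve {E : Type*} [NormedAddCommGroup E]
    [NormedSpace ℝ E] {X : E → E} {D D' : ℝ → E} {Λ : ℝ → ℝ} {T₀ : ℝ} (hT₀ : 0 < T₀)
    (hΛ : Continuous Λ) (hΛpos : ∀ θ, 0 < Λ θ) (hΛper : Periodic Λ T₀) (hDper : Periodic D T₀)
    (hD : ∀ θ, HasDerivAt D (D' θ) θ) (hX : ∀ θ, X (D θ) = Λ θ • D' θ) :
    ∃ (γ : ℝ → E) (T : ℝ), 0 < T ∧ γ 0 = D 0 ∧ (∀ t, HasDerivAt γ (X (γ t)) t) ∧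
      γ T = D 0 ∧ ∀ θ, ∃ t, γ t = D θ := by
  obtain ⟨g, hg0, hgmono, hgsurj, hg⟩ :=
    exists_surjective_hasDerivAt_of_periodic hΛ hΛpos hΛper hT₀
  obtain ⟨T, hT⟩ := hgsurj T₀
  refine ⟨D ∘ g, T, hgmono.lt_iff_lt.1 (by rwa [hg0, hT]), by simp [hg0], fun t => ?_,
    by simp [hT, hDper.eq], fun θ => (hgsurj θ).imp fun t ht => by simp [ht]⟩
  simpa [hX, smul_smul, mul_comm] using (hD (g t)).scomp t (hg t)

theorem quadratic_pos {α β δ u v : ℝ} (hα : 0 < α) (hdet : β ^ 2 < α * δ) (huv : (u, v) ≠ 0) :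
    0 < α * u ^ 2 + 2 * β * u * v + δ * v ^ 2 := by
  rcases eq_or_ne v 0 with rfl | hv
  · have hu : u ≠ 0 := fun hu => huv (by simp [hu])
    simpa using mul_pos hα (pow_pos (abs_pos.2 hu) 2 |>.trans_eq (sq_abs u))
  · nlinarith [sq_nonneg (α * u + β * v), pow_pos (abs_pos.2 hv) 2, sq_abs v]

theorem eventually_pos_quadratic {Y : Type*} [TopologicalSpace Y] {a b d : Y → ℝ} {y₀ : Y}
    (ha : ContinuousAt a y₀) (hb : ContinuousAt b y₀) (hd : ContinuousAt d y₀)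
    (hpos : 0 < a y₀) (hdet : b y₀ ^ 2 < a y₀ * d y₀) :
    ∀ᶠ y in 𝓝 y₀, ∀ u v : ℝ, (u, v) ≠ 0 → 0 < a y * u ^ 2 + 2 * b y * u * v + d y * v ^ 2 := by
  filter_upwards [continuousAt_const.eventually_lt ha hpos,
    (hb.pow 2).eventually_lt (ha.mul hd) hdet] with y hay hdety u v huv
  exact quadratic_pos hay hdety huv

theorem HasCenterAt.neg {X : ℝ × ℝ → ℝ × ℝ} {p : ℝ × ℝ} (h : HasCenterAt X p) :
    HasCenterAt (-X) p := by
  obtain ⟨hXp, ε, hε, horbit⟩ := h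
  refine ⟨by simp [hXp], ε, hε, fun z hz hzε => ?_⟩
  obtain ⟨γ, T, hT, hγ0, hγ, hγT, t₁, t₂, hne⟩ := horbit z hz hzε
  refine ⟨fun t => γ (T - t), T, hT, by simpa using hγT, fun t => ?_, by simpa using hγ0,
    T - t₁, T - t₂, by simpa using hne⟩
  simpa [Function.comp_def] using (hγ (T - t)).scomp t ((hasDerivAt_id t).const_sub T)

theorem hasCenterAt_neg_iff {X : ℝ × ℝ → ℝ × ℝ} {p : ℝ × ℝ} :
    HasCenterAt (-X) p ↔ HasCenterAt X p :=
  ⟨fun h => neg_neg X ▸ h.neg, HasCenterAt.neg⟩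

noncomputable def unitVec (θ : ℝ) : ℝ × ℝ := (cos θ, sin θ)

theorem unitVec_periodic : Periodic unitVec (2 * π) := fun θ => by
  simp [unitVec]

theorem unitVec_add_pi (θ : ℝ) : unitVec (θ + π) = -unitVec θ := by
  simp [unitVec]

theorem unitVec_ne_zero (θ : ℝ) : unitVec θ ≠ 0 := fun h => by
  have := sin_sq_add_cos_sq θ
  simp_all [unitVec, Prod.ext_iff]

theorem norm_unitVec_le_one (θ : ℝ) : ‖unitVec θ‖ ≤ 1 := by
  simp [unitVec, Prod.norm_def, abs_cos_le_one, abs_sin_le_one]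

theorem hasDerivAt_unitVec (θ : ℝ) : HasDerivAt unitVec (-sin θ, cos θ) θ :=
  (hasDerivAt_cos θ).prodMk (hasDerivAt_sin θ)

theorem contDiff_unitVec {n : WithTop ℕ∞} : ContDiff ℝ n unitVec :=
  contDiff_cos.prodMk contDiff_sin

theorem continuous_unitVec : Continuous unitVec :=
  contDiff_unitVec.continuous (n := 0)

theorem exists_eq_smul_unitVec (w : ℝ × ℝ) :
    ∃ s θ, 0 ≤ s ∧ s ≤ 2 * ‖w‖ ∧ w = s • unitVec θ := by
  set z : ℂ := ⟨w.1, w.2⟩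
  refine ⟨‖z‖, Complex.arg z, norm_nonneg z, ?_, ?_⟩
  · calc ‖z‖ ≤ |w.1| + |w.2| := Complex.norm_le_abs_re_add_abs_im z
      _ ≤ ‖w‖ + ‖w‖ := add_le_add (norm_fst_le w) (norm_snd_le w)
      _ = 2 * ‖w‖ := by ring
  · ext
    · simp [unitVec, Complex.norm_mul_cos_arg, z]
    · simp [unitVec, Complex.norm_mul_sin_arg, z]

theorem ContinuousLinearMap.apply_prod_eq (L : ℝ × ℝ →L[ℝ] ℝ) (v : ℝ × ℝ) :
    L v = v.1 * L (1, 0) + v.2 * L (0, 1) := by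
  calc L v = L (v.1 • ((1 : ℝ), (0 : ℝ)) + v.2 • ((0 : ℝ), (1 : ℝ))) := by
        congr 1; ext <;> simp
    _ = v.1 * L (1, 0) + v.2 * L (0, 1) := by
        rw [map_add, map_smul, map_smul, smul_eq_mul, smul_eq_mul]

noncomputable def hamiltonianField (H : ℝ × ℝ → ℝ) (w : ℝ × ℝ) : ℝ × ℝ :=
  (fderiv ℝ H w (0, 1), -fderiv ℝ H w (1, 0))

theorem hamiltonianField_neg (H : ℝ × ℝ → ℝ) : hamiltonianField (-H) = -hamiltonianField H := by
  ext w <;> simp [hamiltonianField, show -H = fun w => -H w from rfl]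

theorem hamiltonian_vec_eq_smul (L : ℝ × ℝ →L[ℝ] ℝ) {θ d ρ : ℝ} (hρ : ρ ≠ 0)
    (h : L (ρ • (-sin θ, cos θ) + d • unitVec θ) = 0) :
    (L (0, 1), -L (1, 0)) = -(L (unitVec θ) / ρ) • (ρ • (-sin θ, cos θ) + d • unitVec θ) := by
  rw [L.apply_prod_eq] at h
  rw [L.apply_prod_eq (unitVec θ)]
  have hsc := sin_sq_add_cos_sq θ
  simp only [unitVec, Prod.smul_mk, Prod.fst_add, Prod.snd_add, smul_eq_mul] at h ⊢
  ext <;> simp only [Prod.smul_fst, Prod.smul_snd, Prod.fst_add, Prod.snd_add, smul_eq_mul] <;>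
    field_simp
  · linear_combination cos θ * h - L (0, 1) * ρ * hsc
  · linear_combination sin θ * h + L (1, 0) * ρ * hsc

def HasPosRadialDeriv (H : ℝ × ℝ → ℝ) (p : ℝ × ℝ) (r : ℝ) : Prop :=
  ∀ w, w ≠ 0 → ‖w‖ ≤ r → 0 < fderiv ℝ H (p + w) w

def IsLevelRadius (H : ℝ × ℝ → ℝ) (p : ℝ × ℝ) (r c : ℝ) (ρ : ℝ → ℝ) : Prop :=
  ∀ θ, ρ θ ∈ Ioo 0 r ∧ H (p + ρ θ • unitVec θ) = c

section LevelCurves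

variable {H : ℝ × ℝ → ℝ} {p : ℝ × ℝ} {r c : ℝ} {ρ : ℝ → ℝ}

theorem hasDerivAt_apply_add_smul (hH : Differentiable ℝ H) (p v : ℝ × ℝ) (s : ℝ) :
    HasDerivAt (fun s : ℝ => H (p + s • v)) (fderiv ℝ H (p + s • v) v) s := by
  simpa [Function.comp_def] using
    (hH _).hasFDerivAt.comp_hasDerivAt s (((hasDerivAt_id s).smul_const v).const_add p)

theorem fderiv_unitVec_pos (hrad : HasPosRadialDeriv H p r)
    {s : ℝ} (hs : 0 < s) (hsr : s ≤ r) (θ : ℝ) :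
    0 < fderiv ℝ H (p + s • unitVec θ) (unitVec θ) := by
  have hnorm : ‖s • unitVec θ‖ ≤ r := by
    rw [norm_smul, Real.norm_of_nonneg hs.le]
    nlinarith [norm_unitVec_le_one θ]
  have := hrad _ (smul_ne_zero hs.ne' (unitVec_ne_zero θ)) hnorm
  rw [map_smul, smul_eq_mul] at this
  exact pos_of_mul_pos_right this hs.le

theorem strictMonoOn_apply_add_smul_unitVec (hH : Differentiable ℝ H)
    (hrad : HasPosRadialDeriv H p r) (θ : ℝ) :
    StrictMonoOn (fun s : ℝ => H (p + s • unitVec θ)) (Icc 0 r) := by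
  refine strictMonoOn_of_deriv_pos (convex_Icc 0 r)
    (fun s _ => (hasDerivAt_apply_add_smul hH p _ s).continuousAt.continuousWithinAt) ?_
  intro s hs
  rw [interior_Icc] at hs
  rw [(hasDerivAt_apply_add_smul hH p _ s).deriv]
  exact fderiv_unitVec_pos hrad hs.1 hs.2.le θ

theorem eventually_lt_apply_add_smul_unitVec (hH : Differentiable ℝ H)
    (hrad : HasPosRadialDeriv H p r) (hr : 0 < r) :
    ∀ᶠ z in 𝓝 p, ∀ θ, H z < H (p + r • unitVec θ) := by
  set f : ℝ → ℝ := fun θ => H (p + r • unitVec θ)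
  have hf : Continuous f :=
    hH.continuous.comp (continuous_const.add (continuous_unitVec.const_smul r))
  have hper : Periodic f (2 * π) := fun θ => by simp only [f, unitVec_periodic θ]
  obtain ⟨_, ⟨θm, rfl⟩, hmin⟩ :=
    (hper.compact_of_continuous two_pi_pos.ne' hf).exists_isLeast (range_nonempty f)
  have hpm : H p < f θm := by
    simpa [f] using strictMonoOn_apply_add_smul_unitVec hH hrad θm
      (left_mem_Icc.2 hr.le) (right_mem_Icc.2 hr.le) hr
  filter_upwards [hH.continuous.continuousAt.eventually_lt continuousAt_const hpm]
    with z hz θ using hz.trans_le (hmin ⟨θ, rfl⟩)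

theorem exists_isLevelRadius (hH : Differentiable ℝ H) (hr : 0 < r)
    (hpc : H p < c) (hcr : ∀ θ, c < H (p + r • unitVec θ)) :
    ∃ ρ, IsLevelRadius H p r c ρ := by
  have hivt : ∀ θ, ∃ s ∈ Ioo 0 r, H (p + s • unitVec θ) = c := fun θ =>
    intermediate_value_Ioo hr.le (fun s _ =>
      (hasDerivAt_apply_add_smul hH p (unitVec θ) s).continuousAt.continuousWithinAt)
      ⟨by simpa using hpc, hcr θ⟩
  choose ρ hρ using hivt
  exact ⟨ρ, fun θ => hρ θ⟩

theorem IsLevelRadius.eq_of_apply_eq (hρ : IsLevelRadius H p r c ρ) (hH : Differentiable ℝ H)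
    (hrad : HasPosRadialDeriv H p r) {θ s : ℝ} (hs : s ∈ Icc 0 r)
    (hsc : H (p + s • unitVec θ) = c) : ρ θ = s :=
  (strictMonoOn_apply_add_smul_unitVec hH hrad θ).injOn (Ioo_subset_Icc_self (hρ θ).1) hs
    ((hρ θ).2.trans hsc.symm)

theorem IsLevelRadius.periodic (hρ : IsLevelRadius H p r c ρ) (hH : Differentiable ℝ H)
    (hrad : HasPosRadialDeriv H p r) : Periodic ρ (2 * π) := fun θ =>
  hρ.eq_of_apply_eq hH hrad (Ioo_subset_Icc_self (hρ θ).1)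
    (by rw [unitVec_periodic]; exact (hρ θ).2)

theorem IsLevelRadius.differentiable (hρ : IsLevelRadius H p r c ρ) (hH : ContDiff ℝ 1 H)
    (hrad : HasPosRadialDeriv H p r) : Differentiable ℝ ρ := by
  intro θ
  set G : ℝ × ℝ → ℝ := fun q => H (p + q.2 • unitVec q.1)
  have hG : ContDiff ℝ 1 G :=
    hH.comp (contDiff_const.add (contDiff_snd.smul (contDiff_unitVec.comp contDiff_fst)))
  have hGs : HasDerivAt (fun s => G (θ, s)) (fderiv ℝ G (θ, ρ θ) (0, 1)) (ρ θ) := by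
    simpa [Function.comp_def] using
      (hG.differentiable one_ne_zero _).hasFDerivAt.comp_hasDerivAt (ρ θ)
        ((hasDerivAt_const (ρ θ) θ).prodMk (hasDerivAt_id (ρ θ)))
  have hpos : 0 < fderiv ℝ G (θ, ρ θ) (0, 1) := by
    rw [hGs.unique (hasDerivAt_apply_add_smul (hH.differentiable one_ne_zero) p (unitVec θ) _)]
    exact fderiv_unitVec_pos hrad (hρ θ).1.1 (hρ θ).1.2.le θ
  refine (hG.contDiffAt.hasStrictFDerivAt one_ne_zero).differentiableAt_of_unique
    (ContinuousLinearMap.isInvertible_of_apply_one_ne_zero (by simpa using hpos.ne'))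
    (isOpen_Ioo.mem_nhds (hρ θ).1) fun θ' s hs hGs' => ?_
  exact hρ.eq_of_apply_eq (hH.differentiable one_ne_zero) hrad (Ioo_subset_Icc_self hs)
    (hGs'.trans (hρ θ).2)

theorem IsLevelRadius.exists_orbit (hρ : IsLevelRadius H p r c ρ) (hH : ContDiff ℝ 1 H)
    (hrad : HasPosRadialDeriv H p r) (θ₀ : ℝ) :
    ∃ (γ : ℝ → ℝ × ℝ) (T : ℝ), 0 < T ∧ γ 0 = p + ρ θ₀ • unitVec θ₀ ∧
      (∀ t, HasDerivAt γ (hamiltonianField H (γ t)) t) ∧ γ T = p + ρ θ₀ • unitVec θ₀ ∧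
      ∃ t, γ t = p - ρ (θ₀ + π) • unitVec θ₀ := by
  have hH' : Differentiable ℝ H := hH.differentiable one_ne_zero
  have hρd := hρ.differentiable hH hrad
  have hρper := hρ.periodic hH' hrad
  set C : ℝ → ℝ × ℝ := fun θ => p + ρ θ • unitVec θ
  set C' : ℝ → ℝ × ℝ := fun θ => ρ θ • (-sin θ, cos θ) + deriv ρ θ • unitVec θ
  have hC : ∀ θ, HasDerivAt C (C' θ) θ := fun θ =>
    ((hρd θ).hasDerivAt.smul (hasDerivAt_unitVec θ)).const_add p
  have hCper : Periodic C (2 * π) := fun θ => by simp only [C, hρper θ, unitVec_periodic θ]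
  set κ : ℝ → ℝ := fun θ => fderiv ℝ H (C θ) (unitVec θ) / ρ θ
  have hκ : Continuous κ := by
    refine Continuous.div ?_ hρd.continuous fun θ => (hρ θ).1.1.ne'
    exact ((hH.continuous_fderiv one_ne_zero).comp (continuous_const.add
      (hρd.continuous.smul continuous_unitVec))).clm_apply continuous_unitVec
  have hκper : Periodic κ (2 * π) := fun θ => by
    simp only [κ, hCper θ, hρper θ, unitVec_periodic θ]
  have htangent : ∀ θ, hamiltonianField H (C θ) = -κ θ • C' θ := fun θ => by
    refine hamiltonian_vec_eq_smul _ (hρ θ).1.1.ne' ?_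
    have hconst : HasDerivAt (fun θ => H (C θ)) 0 θ := by
      simpa [C, (hρ _).2] using hasDerivAt_const θ c
    exact ((hH' (C θ)).hasFDerivAt.comp_hasDerivAt θ (hC θ)).unique hconst
  -- `κ > 0`: the flow turns clockwise around the minimum, so the level curve is run backwards.
  obtain ⟨γ, T, hT, hγ0, hγ, hγT, hγsurj⟩ := exists_periodic_orbit_of_tangent_curve
    (X := hamiltonianField H) (D := fun θ => C (θ₀ - θ)) (D' := fun θ => -C' (θ₀ - θ))
    (Λ := fun θ => κ (θ₀ - θ)) two_pi_pos (hκ.comp (continuous_const.sub continuous_id))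
    (fun θ => div_pos (fderiv_unitVec_pos hrad (hρ _).1.1 (hρ _).1.2.le _) (hρ _).1.1)
    (fun θ => by simp only [sub_add_eq_sub_sub, hκper.sub_eq])
    (fun θ => by simp only [sub_add_eq_sub_sub, hCper.sub_eq])
    (fun θ => by
      simpa [Function.comp_def] using (hC (θ₀ - θ)).scomp θ ((hasDerivAt_id θ).const_sub θ₀))
    (fun θ => by simp [htangent])
  refine ⟨γ, T, hT, by simpa using hγ0, hγ, by simpa using hγT, ?_⟩
  obtain ⟨t, ht⟩ := hγsurj (-π)
  exact ⟨t, by simp [ht, C, unitVec_add_pi, sub_eq_add_neg]⟩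

end LevelCurves

theorem exists_pos_hasPosRadialDeriv {H : ℝ × ℝ → ℝ} {p : ℝ × ℝ}
    (hrad : ∀ᶠ w in 𝓝[≠] 0, 0 < fderiv ℝ H (p + w) w) : ∃ r > 0, HasPosRadialDeriv H p r := by
  obtain ⟨δ, hδ, h⟩ := Metric.eventually_nhds_iff.1 (eventually_nhdsWithin_iff.1 hrad)
  exact ⟨δ / 2, half_pos hδ, fun w hw hwr => h (by rw [dist_zero_right]; linarith) hw⟩

theorem exists_mem_Ioo_eq_add_smul_unitVec {p z : ℝ × ℝ} {r : ℝ} (hz : z ≠ p)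
    (hzr : ‖z - p‖ < r / 2) : ∃ s θ, s ∈ Ioo 0 r ∧ z = p + s • unitVec θ := by
  obtain ⟨s, θ, hs0, hsz, hz'⟩ := exists_eq_smul_unitVec (z - p)
  refine ⟨s, θ, ⟨hs0.lt_of_ne ?_, by linarith⟩, by rw [← hz', add_sub_cancel]⟩
  rintro rfl
  exact hz (sub_eq_zero.1 (by simpa using hz'))

theorem hasCenterAt_hamiltonianField {H : ℝ × ℝ → ℝ} {p : ℝ × ℝ} (hH : ContDiff ℝ 1 H)
    (hrad : ∀ᶠ w in 𝓝[≠] 0, 0 < fderiv ℝ H (p + w) w) : HasCenterAt (hamiltonianField H) p := by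
  have hH' := hH.differentiable one_ne_zero
  obtain ⟨r, hr, hrad⟩ := exists_pos_hasPosRadialDeriv hrad
  have hlt : ∀ z, z ≠ p → ‖z - p‖ < r / 2 → H p < H z := fun z hz hzr => by
    obtain ⟨s, θ, hs, rfl⟩ := exists_mem_Ioo_eq_add_smul_unitVec hz hzr
    simpa using strictMonoOn_apply_add_smul_unitVec hH' hrad θ (left_mem_Icc.2 hr.le)
      (Ioo_subset_Icc_self hs) hs.1
  have hmin : IsLocalMin H p := by
    filter_upwards [Metric.ball_mem_nhds p (half_pos hr)] with z hz
    rcases eq_or_ne z p with rfl | hzp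
    exacts [le_rfl, (hlt z hzp (by rwa [← dist_eq_norm])).le]
  obtain ⟨ε, hε, hεr⟩ :=
    Metric.eventually_nhds_iff.1 (eventually_lt_apply_add_smul_unitVec hH' hrad hr)
  refine ⟨by simp [hamiltonianField, hmin.fderiv_eq_zero], min ε (r / 2),
    lt_min hε (half_pos hr), fun z hz hzε => ?_⟩
  have hzr : ‖z - p‖ < r / 2 := hzε.trans_le (min_le_right _ _)
  obtain ⟨ρ, hρ⟩ := exists_isLevelRadius hH' hr (hlt z hz hzr)
    (hεr (by rw [dist_eq_norm]; exact hzε.trans_le (min_le_left _ _)))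
  obtain ⟨s, θ, hs, rfl⟩ := exists_mem_Ioo_eq_add_smul_unitVec hz hzr
  obtain ⟨γ, T, hT, hγ0, hγ, hγT, t, ht⟩ := hρ.exists_orbit hH hrad θ
  rw [hρ.eq_of_apply_eq hH' hrad (Ioo_subset_Icc_self hs) rfl] at hγ0 hγT
  refine ⟨γ, T, hT, hγ0, hγ, hγT, 0, t, fun heq => ?_⟩
  rw [hγ0, ht, sub_eq_add_neg, add_right_inj, eq_neg_iff_add_eq_zero, ← add_smul] at heq
  exact unitVec_ne_zero θ
    ((smul_eq_zero.1 heq).resolve_left (by linarith [hs.1, (hρ (θ + π)).1.1]))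

noncomputable def reversibleHamiltonian (a20 a21 a01 a02 a03 b30 : ℝ) (w : ℝ × ℝ) : ℝ :=
  (1 + a01) / 2 * w.2 ^ 2 + a20 * (w.1 ^ 2 - 1) * w.2 + a21 / 2 * w.1 ^ 2 * w.2 ^ 2
    + a02 / 3 * w.2 ^ 3 + a03 / 4 * w.2 ^ 4 + (1 - b30) / 4 * w.1 ^ 4 - (1 - b30) / 2 * w.1 ^ 2

section ReversibleHamiltonian

variable (a20 a21 a01 a02 a03 b30 : ℝ)

theorem contDiff_reversibleHamiltonian :
    ContDiff ℝ 1 (reversibleHamiltonian a20 a21 a01 a02 a03 b30) := by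
  unfold reversibleHamiltonian
  fun_prop

theorem fderiv_reversibleHamiltonian_apply (w v : ℝ × ℝ) :
    fderiv ℝ (reversibleHamiltonian a20 a21 a01 a02 a03 b30) w v =
      (2 * a20 * w.1 * w.2 + a21 * w.1 * w.2 ^ 2 - (1 - b30) * (w.1 - w.1 ^ 3)) * v.1
      + ((1 + a01) * w.2 + a20 * (w.1 ^ 2 - 1) + a21 * w.1 ^ 2 * w.2 + a02 * w.2 ^ 2
        + a03 * w.2 ^ 3) * v.2 := by
  have hx := hasFDerivAt_fst (𝕜 := ℝ) (E := ℝ) (F := ℝ) (p := w)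
  have hy := hasFDerivAt_snd (𝕜 := ℝ) (E := ℝ) (F := ℝ) (p := w)
  have hH : HasFDerivAt (reversibleHamiltonian a20 a21 a01 a02 a03 b30) _ w :=
    (((((((hy.pow 2).const_mul ((1 + a01) / 2)).add
      (((hx.pow 2).sub_const 1).const_mul a20 |>.mul hy)).add
      (((hx.pow 2).const_mul (a21 / 2)).mul (hy.pow 2))).add
      ((hy.pow 3).const_mul (a02 / 3))).add ((hy.pow 4).const_mul (a03 / 4))).add
      ((hx.pow 4).const_mul ((1 - b30) / 4))).sub ((hx.pow 2).const_mul ((1 - b30) / 2))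
  rw [hH.fderiv]
  simp only [nsmul_eq_mul, sub_apply, add_apply, smul_apply, ContinuousLinearMap.coe_fst',
    ContinuousLinearMap.coe_snd', smul_eq_mul]
  ring

theorem hamiltonianField_reversibleHamiltonian :
    hamiltonianField (reversibleHamiltonian a20 a21 a01 a02 a03 b30) = fun p : ℝ × ℝ =>
      (p.2 + a20*(p.1^2-1) + a21*p.1^2*p.2 + a01*p.2 + a02*p.2^2 + a03*p.2^3,
       p.1 - p.1^3 + b30*(p.1^3-p.1) + -(2*a20)*p.1*p.2 + -a21*p.1*p.2^2) := by
  ext w <;> simp only [hamiltonianField, fderiv_reversibleHamiltonian_apply] <;> ring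

theorem eventually_pos_fderiv_reversibleHamiltonian {ε σ : ℝ} (hε : ε ^ 2 = 1) (hσ : σ ^ 2 = 1)
    (hA : 0 < σ * (1 - b30)) (hdet : 4 * a20 ^ 2 < 2 * (1 - b30) * (1 + a01 + a21)) :
    ∀ᶠ w in 𝓝[≠] 0,
      0 < σ * fderiv ℝ (reversibleHamiltonian a20 a21 a01 a02 a03 b30) ((ε, 0) + w) w := by
  -- `σ dH_{(ε,0)+w}(w)` is the quadratic form in `w` with the polynomial coefficients below;
  -- at `w = 0` they are the entries of `σ` times the Hessian of `H` at `(ε, 0)`.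
  have hquad := eventually_pos_quadratic (y₀ := (0 : ℝ × ℝ))
    (a := fun w => σ * (1 - b30) * (2 + 3 * ε * w.1 + w.1 ^ 2))
    (b := fun w => σ * (a20 * (4 * ε + 3 * w.1) + a21 * (ε + w.1) * w.2) / 2)
    (d := fun w => σ * (1 + a01 + a21 * (ε + w.1) ^ 2 + a02 * w.2 + a03 * w.2 ^ 2))
    (by fun_prop) (by fun_prop) (by fun_prop) (by simp only [Prod.fst_zero]; linarith)
    (by
      simp only [Prod.fst_zero, Prod.snd_zero]
      linear_combination hdet + (4 * a20 ^ 2 * ε ^ 2 - 2 * ε ^ 2 * a21 * (1 - b30)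
        - 2 * (1 - b30) * (1 + a01)) * hσ + (4 * a20 ^ 2 - 2 * a21 * (1 - b30)) * hε)
  filter_upwards [nhdsWithin_le_nhds hquad, self_mem_nhdsWithin] with w hw hw0
  convert hw w.1 w.2 hw0 using 1
  simp only [fderiv_reversibleHamiltonian_apply, Prod.fst_add, Prod.snd_add]
  linear_combination σ * (a20 * w.2 + (1 - b30) * (ε * w.1 + 3 * w.1 ^ 2)) * hε

theorem hasCenterAt_reversibleHamiltonian {ε : ℝ} (hε : ε ^ 2 = 1) (hb : b30 ≠ 1)
    (hdet : 4 * a20 ^ 2 < 2 * (1 - b30) * (1 + a01 + a21)) :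
    HasCenterAt (hamiltonianField (reversibleHamiltonian a20 a21 a01 a02 a03 b30)) (ε, 0) := by
  have hH := contDiff_reversibleHamiltonian a20 a21 a01 a02 a03 b30
  rcases (sub_ne_zero.2 hb.symm).lt_or_gt with hA | hA
  -- a maximum of `H`, i.e. a minimum of `-H`, whose Hamiltonian field is the reversed one
  · rw [← hasCenterAt_neg_iff, ← hamiltonianField_neg]
    refine hasCenterAt_hamiltonianField hH.neg ?_
    simpa [show -reversibleHamiltonian a20 a21 a01 a02 a03 b30 = fun w => -_ from rfl]
      using eventually_pos_fderiv_reversibleHamiltonian a20 a21 a01 a02 a03 b30 hε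
        (σ := -1) (by norm_num) (by linarith) hdet
  · refine hasCenterAt_hamiltonianField hH ?_
    simpa using eventually_pos_fderiv_reversibleHamiltonian a20 a21 a01 a02 a03 b30 hε
      (σ := 1) (by norm_num) (by linarith) hdet

end ReversibleHamiltonian

/-- Hamiltonian case: if `b30 ≠ 1`, the linearization at `(1,0)` has positive
determinant, `2 a20 + b11 = 0` and `a21 + b12 = 0`, then the reversible cubic vector
field `X` has a center at `(1,0)` and a center at `(-1,0)`. -/
theorem reversible_cubic_center_Hamiltonian (a20 a21 a01 a02 a03 b30 b11 b12 : ℝ)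
    (hb : b30 ≠ 1)
    (hd : 2*a20*b11 + 2*(1-b30)*(1+a01+a21) > 0)
    (h1 : 2*a20 + b11 = 0) (h2 : a21 + b12 = 0) :
    HasCenterAt (fun p : ℝ × ℝ =>
        (p.2 + a20*(p.1^2-1) + a21*p.1^2*p.2 + a01*p.2 + a02*p.2^2 + a03*p.2^3,
         p.1 - p.1^3 + b30*(p.1^3-p.1) + b11*p.1*p.2 + b12*p.1*p.2^2)) (1, 0) ∧
    HasCenterAt (fun p : ℝ × ℝ =>
        (p.2 + a20*(p.1^2-1) + a21*p.1^2*p.2 + a01*p.2 + a02*p.2^2 + a03*p.2^3,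
         p.1 - p.1^3 + b30*(p.1^3-p.1) + b11*p.1*p.2 + b12*p.1*p.2^2)) (-1, 0) := by
  obtain rfl : b11 = -(2 * a20) := by linarith
  obtain rfl : b12 = -a21 := by linarith
  have hdet : 4 * a20 ^ 2 < 2 * (1 - b30) * (1 + a01 + a21) := by linarith
  rw [← hamiltonianField_reversibleHamiltonian a20 a21 a01 a02 a03 b30]
  exact ⟨hasCenterAt_reversibleHamiltonian _ _ _ _ _ _ (by norm_num) hb hdet,
    hasCenterAt_reversibleHamiltonian _ _ _ _ _ _ (by norm_num) hb hdet⟩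
end
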